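/- arXiv:1312.2730 — 9 statements merged into one kernel-verified Lean document; each statement's English description precedes it below -/
import Mathlib

section
/- Let T be a trigraph of the class 𝓕 and let F be a family of cuts of T such that every inclusion-wise maximal clique K and every inclusion-wise maximal stable set S of T with K ∩ S = ∅ are separated by some cut of F. Then T admits a CS-separator of size at most |F| + 2|V(T)| + 4|σ(T)|. -/
/-- A trigraph: a symmetric adjacency function with values in {-1, 0, 1}. -/
structure Trigraph (V : Type) where
  theta : V → V → ℤ
  symm : ∀ u v, theta u v = theta v u
  range : ∀ u v, theta u v = -1 ∨ theta u v = 0 ∨ theta u v = 1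

namespace Trigraph

variable {V : Type}

def StrongAdj (T : Trigraph V) (u v : V) : Prop := u ≠ v ∧ T.theta u v = 1

def StrongAntiAdj (T : Trigraph V) (u v : V) : Prop := u ≠ v ∧ T.theta u v = -1

/-- A switchable (semiadjacent) pair. -/
def Switchable (T : Trigraph V) (u v : V) : Prop := u ≠ v ∧ T.theta u v = 0

def Adj (T : Trigraph V) (u v : V) : Prop := u ≠ v ∧ 0 ≤ T.theta u v

def AntiAdj (T : Trigraph V) (u v : V) : Prop := u ≠ v ∧ T.theta u v ≤ 0

/-- The complement trigraph. -/
def compl (T : Trigraph V) : Trigraph V where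
  theta := fun u v => - T.theta u v
  symm := fun u v => by show -T.theta u v = -T.theta v u; rw [T.symm u v]
  range := fun u v => by
    show -T.theta u v = -1 ∨ -T.theta u v = 0 ∨ -T.theta u v = 1
    rcases T.range u v with h | h | h <;> simp [h]

/-- The full realization: all switchable pairs become edges. -/
def fullRealization (T : Trigraph V) : SimpleGraph V where
  Adj := T.Adj
  symm := by
    refine ⟨?_⟩
    intro u v h
    exact ⟨Ne.symm h.1, by rw [T.symm v u]; exact h.2⟩
  loopless := ⟨fun v h => h.1 rfl⟩

/-- `G` is a realization of `T`. -/
def IsRealization (T : Trigraph V) (G : SimpleGraph V) : Prop :=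
  (∀ u v, T.StrongAdj u v → G.Adj u v) ∧ (∀ u v, T.StrongAntiAdj u v → ¬ G.Adj u v)

/-- A graph contains an induced cycle of odd length at least 5. -/
def GraphHasOddHole (G : SimpleGraph V) : Prop :=
  ∃ n : ℕ, 2 ≤ n ∧ ∃ f : ZMod (2 * n + 1) → V, Function.Injective f ∧
    ∀ i j, G.Adj (f i) (f j) ↔ (j = i + 1 ∨ i = j + 1)

def GraphIsBerge (G : SimpleGraph V) : Prop := ¬ GraphHasOddHole G ∧ ¬ GraphHasOddHole Gᶜ

/-- A trigraph is Berge if every realization is a Berge graph. -/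
def Berge (T : Trigraph V) : Prop := ∀ G : SimpleGraph V, T.IsRealization G → GraphIsBerge G

/-- The graph on V whose edges are the switchable pairs of T. -/
def switchGraph (T : Trigraph V) : SimpleGraph V where
  Adj := T.Switchable
  symm := by
    refine ⟨?_⟩
    intro u v h
    exact ⟨Ne.symm h.1, by rw [T.symm v u]; exact h.2⟩
  loopless := ⟨fun v h => h.1 rfl⟩

/-- Membership in the class 𝓕 of Berge trigraphs with restricted switchable components. -/
def InF (T : Trigraph V) : Prop :=
  T.Berge ∧
  (∀ v : V, {e ∈ T.switchGraph.edgeSet | ∀ x ∈ e, T.switchGraph.Reachable v x}.ncard ≤ 2) ∧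
  (∀ v x y : V, x ≠ y → T.Switchable v x → T.Switchable v y →
    ((∀ u, u ≠ v → u ≠ x → u ≠ y → T.StrongAdj v u) ∧ T.StrongAdj x y) ∨
    ((∀ u, u ≠ v → u ≠ x → u ≠ y → T.StrongAntiAdj v u) ∧ T.StrongAntiAdj x y))

/-- A path of length `k` in a trigraph, given by its sequence of vertices. -/
def IsPath (T : Trigraph V) (k : ℕ) (f : Fin (k + 1) → V) : Prop :=
  Function.Injective f ∧ ∀ i j : Fin (k + 1),
    (j.val = i.val + 1 → T.Adj (f i) (f j)) ∧ (i.val + 1 < j.val → T.AntiAdj (f i) (f j))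

/-- `X` is connected: the full realization of `T[X]` is connected. -/
def ConnectedOn (T : Trigraph V) (X : Set V) : Prop :=
  (T.fullRealization.induce X).Connected

/-- `X` is anticonnected: the full realization of the complement of `T[X]` is connected. -/
def AnticonnectedOn (T : Trigraph V) (X : Set V) : Prop :=
  (T.compl.fullRealization.induce X).Connected

def IsSkewPartition (T : Trigraph V) (A B : Set V) : Prop :=
  A.Nonempty ∧ B.Nonempty ∧ Disjoint A B ∧ A ∪ B = Set.univ ∧
  ¬ T.ConnectedOn A ∧ ¬ T.AnticonnectedOn B

def IsBalancedSkewPartition (T : Trigraph V) (A B : Set V) : Prop :=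
  T.IsSkewPartition A B ∧
  (∀ (k : ℕ) (f : Fin (k + 1) → V), Odd k → 1 < k → T.IsPath k f →
    ¬ (f 0 ∈ B ∧ f (Fin.last k) ∈ B ∧ ∀ i, i ≠ 0 → i ≠ Fin.last k → f i ∈ A)) ∧
  (∀ (k : ℕ) (f : Fin (k + 1) → V), Odd k → 1 < k → T.compl.IsPath k f →
    ¬ (f 0 ∈ A ∧ f (Fin.last k) ∈ A ∧ ∀ i, i ≠ 0 → i ≠ Fin.last k → f i ∈ B))

def HasBalancedSkewPartition (T : Trigraph V) : Prop :=
  ∃ A B, T.IsBalancedSkewPartition A B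

def IsClique (T : Trigraph V) (K : Set V) : Prop := K.Pairwise T.Adj

def IsStable (T : Trigraph V) (S : Set V) : Prop := S.Pairwise T.AntiAdj

def IsCut (c : Set V × Set V) : Prop := Disjoint c.1 c.2 ∧ c.1 ∪ c.2 = Set.univ

def IsCSSeparator (T : Trigraph V) (F : Finset (Set V × Set V)) : Prop :=
  (∀ c ∈ F, IsCut c) ∧
  ∀ K S : Set V, T.IsClique K → T.IsStable S → Disjoint K S →
    ∃ c ∈ F, K ⊆ c.1 ∧ S ⊆ c.2

end Trigraph

/-!
Extend a clique `K` and a disjoint stable set `S` to maximal ones `K'`, `S'`. If `K'` and `S'`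
are disjoint, `F` separates them, hence `K` and `S`. Otherwise they share a vertex `v`, which is
then adjacent to all of `K ∖ {v}` and antiadjacent to all of `S ∖ {v}`. If `Q` is a set of
switchable neighbours of `v` containing those in `K` and avoiding `S`, one of the two cuts whose
first side is the strong neighbourhood of `v` plus `Q`, with or without `v`, separates `K` and `S`.
As `v` has at most two switchable neighbours, they form a clique or a stable set, and `Q` can be
chosen so that they split into the clique `Q` and a stable rest. Condition (ii) leaves at most
`deg v + 1` such splittings, hence at most `2 (deg v + 1)` cuts per vertex, and summing over `v`
gives `2 |V| + 4 |σ(T)|`.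
-/

namespace Trigraph

variable {V : Type} {T : Trigraph V}

lemma Adj.strongAdj_or_switchable {u v : V} (h : T.Adj u v) :
    T.StrongAdj u v ∨ T.Switchable u v := by
  rcases T.range u v with h' | h' | h'
  · exact absurd h.2 (by omega)
  · exact .inr ⟨h.1, h'⟩
  · exact .inl ⟨h.1, h'⟩

lemma AntiAdj.not_strongAdj {u v : V} (h : T.AntiAdj u v) : ¬ T.StrongAdj u v :=
  fun h' => by have := h.2; have := h'.2; omega

lemma isClique_or_isStable_of_card_le_two {N : Finset V} (hN : N.card ≤ 2) :
    T.IsClique N ∨ T.IsStable N := by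
  classical
  rcases Nat.lt_or_eq_of_le hN with h1 | h2
  · exact .inl fun x hx y hy hxy => absurd (Finset.card_le_one.mp (by omega) x hx y hy) hxy
  · obtain ⟨x, y, hxy, rfl⟩ := Finset.card_eq_two.mp h2
    rw [Finset.coe_pair]
    rcases le_total 0 (T.theta x y) with h | h
    · exact .inl (Set.pairwise_pair.mpr fun _ => ⟨⟨hxy, h⟩, hxy.symm, T.symm y x ▸ h⟩)
    · exact .inr (Set.pairwise_pair.mpr fun _ => ⟨⟨hxy, h⟩, hxy.symm, T.symm y x ▸ h⟩)

open Classical in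
noncomputable def splitSubsets (T : Trigraph V) (N : Finset V) : Finset (Finset V) :=
  N.powerset.filter fun Q => T.IsClique (Q : Set V) ∧ T.IsStable ((N : Set V) \ Q)

lemma mem_splitSubsets {N Q : Finset V} :
    Q ∈ T.splitSubsets N ↔ Q ⊆ N ∧ T.IsClique (Q : Set V) ∧ T.IsStable ((N : Set V) \ Q) := by
  classical
  rw [splitSubsets, Finset.mem_filter, Finset.mem_powerset]

lemma card_splitSubsets_lt {N : Finset V} (h : ¬ (T.IsClique N ∧ T.IsStable N)) :
    (T.splitSubsets N).card < 2 ^ N.card := by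
  classical
  rw [← Finset.card_powerset]
  refine Finset.card_lt_card (Finset.filter_ssubset.mpr ?_)
  by_cases hc : T.IsClique N
  · exact ⟨∅, Finset.empty_mem_powerset _, fun h' => h ⟨hc, by simpa using h'.2⟩⟩
  · exact ⟨N, Finset.mem_powerset_self _, fun h' => hc h'.1⟩

lemma exists_mem_splitSubsets {N : Finset V} (hN : T.IsClique N ∨ T.IsStable N)
    {K S : Set V} (hK : T.IsClique K) (hS : T.IsStable S) (hKS : Disjoint K S) :
    ∃ Q ∈ T.splitSubsets N, ↑N ∩ K ⊆ ↑Q ∧ Disjoint (Q : Set V) S := by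
  classical
  rcases hN with hN | hN
  · refine ⟨N.filter (· ∉ S), mem_splitSubsets.mpr ⟨Finset.filter_subset _ _, ?_, ?_⟩, ?_, ?_⟩
    · exact hN.mono (Finset.coe_subset.mpr (Finset.filter_subset _ _))
    · exact hS.mono fun x hx => by_contra fun hxS => hx.2 (by simpa using ⟨hx.1, hxS⟩)
    · exact fun x hx => by simpa using ⟨hx.1, Set.disjoint_left.mp hKS hx.2⟩
    · exact Set.disjoint_left.mpr fun x hx => (Finset.mem_filter.mp hx).2
  · refine ⟨N.filter (· ∈ K), mem_splitSubsets.mpr ⟨Finset.filter_subset _ _, ?_, ?_⟩, ?_, ?_⟩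
    · exact hK.mono fun x hx => (Finset.mem_filter.mp hx).2
    · exact hN.mono Set.sdiff_subset
    · exact fun x hx => by simpa using hx
    · exact Set.disjoint_left.mpr fun x hx => Set.disjoint_left.mp hKS (Finset.mem_filter.mp hx).2

def cutOf (U : Set V) : Set V × Set V := (U, Uᶜ)

lemma isCut_cutOf (U : Set V) : IsCut (cutOf U) :=
  ⟨disjoint_compl_right, Set.union_compl_self U⟩

open Classical in
noncomputable def vertexCuts (T : Trigraph V) (v : V) (Q : Set V) : Finset (Set V × Set V) :=
  {cutOf ({u | T.StrongAdj v u} ∪ Q), cutOf (insert v ({u | T.StrongAdj v u} ∪ Q))}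

lemma exists_mem_vertexCuts_separating {v : V} {Q K S : Set V}
    (hKv : ∀ u ∈ K, u ≠ v → T.Adj v u) (hSv : ∀ u ∈ S, u ≠ v → T.AntiAdj v u)
    (hKQ : ∀ u ∈ K, T.Switchable v u → u ∈ Q) (hQS : Disjoint Q S) (hKS : Disjoint K S) :
    ∃ c ∈ T.vertexCuts v Q, K ⊆ c.1 ∧ S ⊆ c.2 := by
  set U := {u | T.StrongAdj v u} ∪ Q
  have hK : K ⊆ insert v U := fun u hu => or_iff_not_imp_left.mpr fun huv =>
    (hKv u hu huv).strongAdj_or_switchable.imp id (hKQ u hu)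
  have hS : ∀ u ∈ S, u ∉ U := by
    rintro u hu (hs | hq)
    · exact (hSv u hu hs.1.symm).not_strongAdj hs
    · exact Set.disjoint_left.mp hQS hq hu
  by_cases hvS : v ∈ S
  · refine ⟨cutOf U, by simp [vertexCuts, U], fun u hu => ?_, hS⟩
    exact (hK hu).resolve_left (by rintro rfl; exact Set.disjoint_left.mp hKS hu hvS)
  · refine ⟨cutOf (insert v U), by simp [vertexCuts, U], hK, ?_⟩
    rintro u hu (rfl | hU)
    · exact hvS hu
    · exact hS u hu hU

section Finite

open Classical

variable [Fintype V]

lemma InF.degree_switchGraph_le_two (hF : T.InF) (v : V) : T.switchGraph.degree v ≤ 2 := by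
  rw [← T.switchGraph.card_incidenceSet_eq_degree, ← Nat.card_eq_fintype_card, Nat.card_coe_set_eq]
  refine le_trans (Set.ncard_le_ncard ?_ (Set.toFinite _)) (hF.2.1 v)
  rintro e ⟨he, hve⟩
  refine ⟨he, fun x hx => ?_⟩
  rcases eq_or_ne v x with rfl | hne
  · rfl
  · rw [(Sym2.mem_and_mem_iff hne).mp ⟨hve, hx⟩, SimpleGraph.mem_edgeSet] at he
    exact he.reachable

lemma InF.not_isClique_and_isStable (hF : T.InF) {v : V}
    (h : (T.switchGraph.neighborFinset v).card = 2) :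
    ¬ (T.IsClique (T.switchGraph.neighborFinset v) ∧ T.IsStable (T.switchGraph.neighborFinset v)) := by
  obtain ⟨x, y, hxy, hN⟩ := Finset.card_eq_two.mp h
  have hx : x ∈ T.switchGraph.neighborFinset v := by simp [hN]
  have hy : y ∈ T.switchGraph.neighborFinset v := by simp [hN]
  rintro ⟨hc, hs⟩
  have h₁ := (hc hx hy hxy).2
  have h₂ := (hs hx hy hxy).2
  rw [SimpleGraph.mem_neighborFinset] at hx hy
  rcases hF.2.2 v x y hxy hx hy with ⟨-, h⟩ | ⟨-, h⟩ <;> have := h.2 <;> omega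

lemma InF.card_splitSubsets_le (hF : T.InF) (v : V) :
    (T.splitSubsets (T.switchGraph.neighborFinset v)).card ≤ T.switchGraph.degree v + 1 := by
  have hle := hF.degree_switchGraph_le_two v
  rw [← SimpleGraph.card_neighborFinset_eq_degree] at hle ⊢
  rcases hle.lt_or_eq with h | h
  · have : (T.splitSubsets (T.switchGraph.neighborFinset v)).card ≤ 2 ^ _ :=
      (Finset.card_filter_le _ _).trans (Finset.card_powerset _).le
    interval_cases (T.switchGraph.neighborFinset v).card <;> omega
  · have := card_splitSubsets_lt (hF.not_isClique_and_isStable h)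
    rw [h] at this ⊢
    omega

noncomputable def vertexCutFamily (T : Trigraph V) : Finset (Set V × Set V) :=
  Finset.univ.biUnion fun v =>
    (T.splitSubsets (T.switchGraph.neighborFinset v)).biUnion fun Q => T.vertexCuts v Q

lemma isCut_of_mem_vertexCutFamily {c : Set V × Set V} (hc : c ∈ T.vertexCutFamily) : IsCut c := by
  simp only [vertexCutFamily, vertexCuts, Finset.mem_biUnion, Finset.mem_insert,
    Finset.mem_singleton] at hc
  obtain ⟨v, -, Q, -, rfl | rfl⟩ := hc <;> exact isCut_cutOf _

lemma InF.card_vertexCutFamily_le (hF : T.InF) :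
    T.vertexCutFamily.card ≤ 2 * Fintype.card V + 4 * T.switchGraph.edgeSet.ncard := by
  calc T.vertexCutFamily.card
      ≤ ∑ v, ((T.splitSubsets (T.switchGraph.neighborFinset v)).biUnion
          fun Q => T.vertexCuts v Q).card := Finset.card_biUnion_le
    _ ≤ ∑ v, (T.splitSubsets (T.switchGraph.neighborFinset v)).card * 2 :=
        Finset.sum_le_sum fun v _ =>
          Finset.card_biUnion_le_card_mul _ _ _ fun Q _ => Finset.card_le_two
    _ ≤ ∑ v, (T.switchGraph.degree v + 1) * 2 :=
        Finset.sum_le_sum fun v _ => Nat.mul_le_mul_right _ (hF.card_splitSubsets_le v)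
    _ = 2 * Fintype.card V + 4 * T.switchGraph.edgeSet.ncard := by
        rw [← Finset.sum_mul, Finset.sum_add_distrib, SimpleGraph.sum_degrees_eq_twice_card_edges,
          ← SimpleGraph.coe_edgeFinset, Set.ncard_coe_finset]
        simp only [Finset.sum_const, Finset.card_univ, smul_eq_mul]
        ring

lemma InF.exists_mem_vertexCutFamily_separating (hF : T.InF) {K S : Set V} (hK : T.IsClique K)
    (hS : T.IsStable S) (hKS : Disjoint K S) {v : V} (hKv : ∀ u ∈ K, u ≠ v → T.Adj v u)
    (hSv : ∀ u ∈ S, u ≠ v → T.AntiAdj v u) :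
    ∃ c ∈ T.vertexCutFamily, K ⊆ c.1 ∧ S ⊆ c.2 := by
  have hN := (SimpleGraph.card_neighborFinset_eq_degree _ v).trans_le
    (hF.degree_switchGraph_le_two v)
  obtain ⟨Q, hQ, hKQ, hQS⟩ := exists_mem_splitSubsets (isClique_or_isStable_of_card_le_two hN)
    hK hS hKS
  obtain ⟨c, hc, hsep⟩ := exists_mem_vertexCuts_separating hKv hSv
    (fun u hu hvu => hKQ ⟨(SimpleGraph.mem_neighborFinset _ _ _).mpr hvu, hu⟩) hQS hKS
  exact ⟨c, Finset.mem_biUnion.mpr ⟨v, Finset.mem_univ v, Finset.mem_biUnion.mpr ⟨Q, hQ, hc⟩⟩, hsep⟩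

lemma InF.isCSSeparator_union_vertexCutFamily (hF : T.InF) {F : Finset (Set V × Set V)}
    (hcuts : ∀ c ∈ F, IsCut c)
    (hsep : ∀ K S : Set V,
      T.IsClique K → (∀ K', T.IsClique K' → K ⊆ K' → K' = K) →
      T.IsStable S → (∀ S', T.IsStable S' → S ⊆ S' → S' = S) →
      Disjoint K S → ∃ c ∈ F, K ⊆ c.1 ∧ S ⊆ c.2) :
    T.IsCSSeparator (F ∪ T.vertexCutFamily) := by
  refine ⟨fun c hc => (Finset.mem_union.mp hc).elim (hcuts c) isCut_of_mem_vertexCutFamily,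
    fun K S hK hS hKS => ?_⟩
  obtain ⟨K', hKK', hK'⟩ := (Set.toFinite {K | T.IsClique K}).exists_le_maximal hK
  obtain ⟨S', hSS', hS'⟩ := (Set.toFinite {S | T.IsStable S}).exists_le_maximal hS
  rcases Set.disjoint_or_nonempty_inter K' S' with hdisj | ⟨v, hvK, hvS⟩
  · obtain ⟨c, hc, hKc, hSc⟩ := hsep K' S' hK'.1 (fun L hL hle => (hK'.eq_of_subset hL hle).symm)
      hS'.1 (fun L hL hle => (hS'.eq_of_subset hL hle).symm) hdisj
    exact ⟨c, Finset.mem_union_left _ hc, hKK'.trans hKc, hSS'.trans hSc⟩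
  · obtain ⟨c, hc, hsep⟩ := hF.exists_mem_vertexCutFamily_separating hK hS hKS
      (fun u hu huv => hK'.1 hvK (hKK' hu) huv.symm) (fun u hu huv => hS'.1 hvS (hSS' hu) huv.symm)
    exact ⟨c, Finset.mem_union_right _ hc, hsep⟩

end Finite

end Trigraph

/-- If a family F of cuts of a trigraph of 𝓕 separates all disjoint pairs of
an inclusion-wise maximal clique and an inclusion-wise maximal stable set, then the
trigraph admits a CS-separator of size at most |F| + 2|V(T)| + 4|σ(T)|. -/
theorem stmt_5 {V : Type} [Fintype V] (T : Trigraph V) (hF : T.InF)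
    (F : Finset (Set V × Set V)) (hcuts : ∀ c ∈ F, Trigraph.IsCut c)
    (hsep : ∀ K S : Set V,
      T.IsClique K → (∀ K', T.IsClique K' → K ⊆ K' → K' = K) →
      T.IsStable S → (∀ S', T.IsStable S' → S ⊆ S' → S' = S) →
      Disjoint K S → ∃ c ∈ F, K ⊆ c.1 ∧ S ⊆ c.2) :
    ∃ F' : Finset (Set V × Set V), T.IsCSSeparator F' ∧
      F'.card ≤ F.card + 2 * Fintype.card V + 4 * T.switchGraph.edgeSet.ncard :=
  ⟨F ∪ T.vertexCutFamily, hF.isCSSeparator_union_vertexCutFamily hcuts hsep,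
    (Finset.card_union_le _ _).trans (by have := hF.card_vertexCutFamily_le; omega)⟩
end

section
/- Let G be a finite simple graph with at most M inclusion-wise maximal cliques. Then G admits a CS-separator of size at most M + 2|V(G)|. -/
variable {V : Type}

/-- A clique of a graph: a set of pairwise adjacent vertices. -/
def GIsClique (G : SimpleGraph V) (K : Set V) : Prop := K.Pairwise G.Adj

/-- A stable set of a graph: a set of pairwise non-adjacent vertices. -/
def GIsStable (G : SimpleGraph V) (S : Set V) : Prop := S.Pairwise fun u v => ¬ G.Adj u v

/-- A cut: an ordered pair of disjoint vertex sets covering all vertices. -/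
def GIsCut (c : Set V × Set V) : Prop := Disjoint c.1 c.2 ∧ c.1 ∪ c.2 = Set.univ

/-- A CS-separator: a family of cuts separating every clique from every disjoint stable set. -/
def GIsCSSeparator (G : SimpleGraph V) (F : Finset (Set V × Set V)) : Prop :=
  (∀ c ∈ F, GIsCut c) ∧
  ∀ K S : Set V, GIsClique G K → GIsStable G S → Disjoint K S →
    ∃ c ∈ F, K ⊆ c.1 ∧ S ⊆ c.2

/-- `G` contains an induced cycle of odd length at least 5. -/
def GHasOddHole (G : SimpleGraph V) : Prop :=
  ∃ n : ℕ, 2 ≤ n ∧ ∃ f : ZMod (2 * n + 1) → V, Function.Injective f ∧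
    ∀ i j, G.Adj (f i) (f j) ↔ (j = i + 1 ∨ i = j + 1)

/-- A graph is Berge if neither it nor its complement has an odd hole. -/
def GIsBerge (G : SimpleGraph V) : Prop := ¬ GHasOddHole G ∧ ¬ GHasOddHole Gᶜ

/-- An induced path of length `k` in `G`, given by its sequence of vertices. -/
def GIsInducedPath (G : SimpleGraph V) (k : ℕ) (f : Fin (k + 1) → V) : Prop :=
  Function.Injective f ∧
  ∀ i j : Fin (k + 1), G.Adj (f i) (f j) ↔ (j.val = i.val + 1 ∨ i.val = j.val + 1)

/-- A skew-partition of a graph. -/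
def GIsSkewPartition (G : SimpleGraph V) (A B : Set V) : Prop :=
  A.Nonempty ∧ B.Nonempty ∧ Disjoint A B ∧ A ∪ B = Set.univ ∧
  ¬ (G.induce A).Connected ∧ ¬ ((G.induce B)ᶜ).Connected

/-- A balanced skew-partition of a graph. -/
def GIsBalancedSkewPartition (G : SimpleGraph V) (A B : Set V) : Prop :=
  GIsSkewPartition G A B ∧
  (∀ (k : ℕ) (f : Fin (k + 1) → V), Odd k → 1 < k → GIsInducedPath G k f →
    ¬ (f 0 ∈ B ∧ f (Fin.last k) ∈ B ∧ ∀ i, i ≠ 0 → i ≠ Fin.last k → f i ∈ A)) ∧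
  (∀ (k : ℕ) (f : Fin (k + 1) → V), Odd k → 1 < k → GIsInducedPath Gᶜ k f →
    ¬ (f 0 ∈ A ∧ f (Fin.last k) ∈ A ∧ ∀ i, i ≠ 0 → i ≠ Fin.last k → f i ∈ B))

def GHasBalancedSkewPartition (G : SimpleGraph V) : Prop :=
  ∃ A B, GIsBalancedSkewPartition G A B

/-- `C` is a connected component of the subgraph of `G` induced on `X`. -/
def GIsComponentOf (G : SimpleGraph V) (X C : Set V) : Prop :=
  C ⊆ X ∧ C.Nonempty ∧ (G.induce C).Connected ∧
  ∀ D : Set V, C ⊆ D → D ⊆ X → (G.induce D).Connected → D = C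

/-
Take the cut `(K, Kᶜ)` for every maximal clique `K` and the cut `(N(v), N(v)ᶜ)` for every vertex
`v`. Given a clique `K` and a disjoint stable set `S`, extend `K` to a maximal clique `K'`. If `K'`
misses `S`, the cut of `K'` separates them. Otherwise `K'` meets `S` in some `v`; then `v ∉ K`, so
`K ⊆ N(v)`, while `S` is stable and contains `v`, so `S` avoids `N(v)`.
-/

def complCut (X : Set V) : Set V × Set V := (X, Xᶜ)

theorem isCut_complCut (X : Set V) : GIsCut (complCut X) :=
  ⟨disjoint_compl_right, Set.union_compl_self X⟩

namespace SimpleGraph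

variable (G : SimpleGraph V)

def maximalCliques : Set (Set V) :=
  {K : Set V | GIsClique G K ∧ ∀ K', GIsClique G K' → K ⊆ K' → K' = K}

theorem exists_mem_maximalCliques_superset [Finite V] {K : Set V} (hK : GIsClique G K) :
    ∃ K' ∈ G.maximalCliques, K ⊆ K' := by
  obtain ⟨K', ⟨hK'clique, hKK'⟩, hK'max⟩ :=
    Set.Finite.exists_maximalFor id {K' | GIsClique G K' ∧ K ⊆ K'} (Set.toFinite _)
      ⟨K, hK, le_rfl⟩
  refine ⟨K', ⟨hK'clique, fun K'' hK'' hK'K'' => ?_⟩, hKK'⟩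
  exact (hK'max ⟨hK'', hKK'.trans hK'K''⟩ hK'K'').antisymm hK'K''

theorem subset_neighborSet_of_mem_clique {K K' : Set V} {v : V} (hK' : GIsClique G K')
    (hKK' : K ⊆ K') (hv : v ∈ K') (hvK : v ∉ K) : K ⊆ G.neighborSet v := fun _ hk =>
  hK' hv (hKK' hk) fun hvk => hvK (hvk ▸ hk)

theorem subset_compl_neighborSet_of_mem_stable {S : Set V} {v : V} (hS : GIsStable G S)
    (hv : v ∈ S) : S ⊆ (G.neighborSet v)ᶜ := by
  intro s hs hadj
  exact hS hv hs (G.ne_of_adj hadj) hadj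

open Classical in
noncomputable def cliqueNeighborhoodSeparator [Fintype V] : Finset (Set V × Set V) :=
  (Set.toFinite G.maximalCliques).toFinset.image complCut ∪
    Finset.univ.image fun v => complCut (G.neighborSet v)

theorem isCSSeparator_cliqueNeighborhoodSeparator [Fintype V] :
    GIsCSSeparator G G.cliqueNeighborhoodSeparator := by
  refine ⟨fun c hc => ?_, fun K S hK hS hKS => ?_⟩
  · simp only [cliqueNeighborhoodSeparator, Finset.mem_union, Finset.mem_image] at hc
    obtain ⟨X, -, rfl⟩ | ⟨v, -, rfl⟩ := hc <;> exact isCut_complCut _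
  obtain ⟨K', hK'max, hKK'⟩ := G.exists_mem_maximalCliques_superset hK
  by_cases hK'S : Disjoint K' S
  · refine ⟨complCut K', ?_, hKK', hK'S.subset_compl_left⟩
    exact Finset.mem_union_left _
      (Finset.mem_image_of_mem _ ((Set.toFinite _).mem_toFinset.2 hK'max))
  · obtain ⟨v, hvK', hvS⟩ := Set.not_disjoint_iff.1 hK'S
    refine ⟨complCut (G.neighborSet v), ?_, ?_,
      G.subset_compl_neighborSet_of_mem_stable hS hvS⟩
    · exact Finset.mem_union_right _ (Finset.mem_image_of_mem _ (Finset.mem_univ v))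
    · exact G.subset_neighborSet_of_mem_clique hK'max.1 hKK' hvK'
        fun hvK => hKS.ne_of_mem hvK hvS rfl

theorem card_cliqueNeighborhoodSeparator_le [Fintype V] :
    G.cliqueNeighborhoodSeparator.card ≤ G.maximalCliques.ncard + Fintype.card V := by
  calc G.cliqueNeighborhoodSeparator.card
      ≤ (Set.toFinite G.maximalCliques).toFinset.card + Finset.univ.card :=
        (Finset.card_union_le _ _).trans (add_le_add Finset.card_image_le Finset.card_image_le)
    _ = G.maximalCliques.ncard + Fintype.card V := by
        rw [Set.ncard_eq_toFinset_card _ (Set.toFinite _), Finset.card_univ]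

end SimpleGraph

/-- A finite simple graph with at most M inclusion-wise maximal cliques
admits a CS-separator of size at most M + 2|V(G)|. -/
theorem stmt_7 {V : Type} [Fintype V] (G : SimpleGraph V) (M : ℕ)
    (hM : {K : Set V | GIsClique G K ∧ ∀ K', GIsClique G K' → K ⊆ K' → K' = K}.ncard ≤ M) :
    ∃ F : Finset (Set V × Set V), GIsCSSeparator G F ∧
      F.card ≤ M + 2 * Fintype.card V := by
  refine ⟨G.cliqueNeighborhoodSeparator, G.isCSSeparator_cliqueNeighborhoodSeparator, ?_⟩
  have hcard := G.card_cliqueNeighborhoodSeparator_le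
  change G.maximalCliques.ncard ≤ M at hM
  omega
end

section
/- Let G be a finite simple graph admitting a good partition. Then G admits a CS-separator of size at most 3(|V(G)| + 1)². -/
variable {V : Type}

/-- A good partition of a graph. -/
def GIsGoodPartition (G : SimpleGraph V) (X Y : Set V) : Prop :=
  Disjoint X Y ∧ X ∪ Y = Set.univ ∧
  (∀ C, GIsComponentOf G X C → C.ncard ≤ 2) ∧
  (∀ C, GIsComponentOf Gᶜ Y C → C.ncard ≤ 2) ∧
  (∀ CX CY, GIsComponentOf G X CX → GIsComponentOf Gᶜ Y CY → ∀ v ∈ CX ∪ CY,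
    {p : V × V | p.1 ∈ CX ∧ p.2 ∈ CY ∧ (p.1 = v ∨ p.2 = v) ∧ G.Adj p.1 p.2}.ncard ≤ 1 ∧
    {p : V × V | p.1 ∈ CX ∧ p.2 ∈ CY ∧ (p.1 = v ∨ p.2 = v) ∧ p.1 ≠ p.2 ∧
      ¬ G.Adj p.1 p.2}.ncard ≤ 1)

/-!
Let `(X, Y)` be a good partition, `K` a clique and `S` a stable set disjoint from `K`, and let
`n = |V|`. Components of `G[X]` and anticomponents of `G[Y]` have at most two vertices, so closed
neighbourhoods inside `X` (in `G`) and inside `Y` (in `Gᶜ`) have at most two vertices.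

If `K` meets `X` in two vertices, they are adjacent, and a common neighbour in `Y` would give
two edges at one vertex between a component and an anticomponent; hence `K ⊆ X`, and `K` is the
closed neighbourhood in `X` of either vertex: `n` cuts suffice for these cliques.

Otherwise `K ∩ X` is empty or a single vertex, and on `Y` it suffices to cut off the
anticomponent containing `S ∩ Y`: take `Y` if `S ∩ Y = ∅`; else, for `s ∈ S ∩ Y`, take `Y` minus
the closed anti-neighbourhood of `s` if `K` avoids it, and otherwise `Y` minus the open
anti-neighbourhood of the vertex `y` of `K` in it. This gives `(n + 1)(2n + 1)` cuts, and
`(n + 1)(2n + 1) + n ≤ 3(n + 1)²`.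
-/
lemma GIsComponentOf.exists_mem [Finite V] (G : SimpleGraph V) {X : Set V} {x : V}
    (hx : x ∈ X) : ∃ C, GIsComponentOf G X C ∧ x ∈ C := by
  obtain ⟨C, ⟨hxC, hCX, hconn⟩, hmax⟩ :=
    Set.Finite.exists_maximalFor id {D : Set V | x ∈ D ∧ D ⊆ X ∧ (G.induce D).Connected}
      (Set.toFinite _) ⟨{x}, rfl, by simpa using hx, by simp⟩
  exact ⟨C, ⟨hCX, ⟨x, hxC⟩, hconn, fun D hCD hDX hD =>
    (hmax ⟨hCD hxC, hDX, hD⟩ hCD).antisymm hCD⟩, hxC⟩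

lemma GIsComponentOf.mem_of_adj {G : SimpleGraph V} {X C : Set V} (hC : GIsComponentOf G X C)
    {x y : V} (hx : x ∈ C) (hy : y ∈ X) (hxy : G.Adj x y) : y ∈ C := by
  have hconn : (G.induce (C ∪ {x, y})).Connected :=
    SimpleGraph.induce_union_connected hC.2.2.1.preconnected
      (SimpleGraph.induce_pair_connected_of_adj hxy).preconnected ⟨x, hx, by simp⟩
  have hsub : C ∪ {x, y} ⊆ X := by
    simp only [Set.union_insert, Set.union_singleton, Set.insert_subset_iff]
    exact ⟨hC.1 hx, hy, hC.1⟩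
  rw [← hC.2.2.2 _ Set.subset_union_left hsub hconn]
  simp

def closedNbhdIn (G : SimpleGraph V) (X : Set V) (x : V) : Set V :=
  insert x (G.neighborSet x ∩ X)

lemma GIsClique.inter_subset_closedNbhdIn {G : SimpleGraph V} {K : Set V} (hK : GIsClique G K)
    (X : Set V) {x : V} (hx : x ∈ K) : K ∩ X ⊆ closedNbhdIn G X x := by
  rintro z ⟨hzK, hzX⟩
  rcases eq_or_ne z x with rfl | hzx
  · exact Set.mem_insert z _
  · exact Or.inr ⟨hK hx hzK hzx.symm, hzX⟩

lemma GIsStable.isClique_compl {G : SimpleGraph V} {S : Set V} (hS : GIsStable G S) :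
    GIsClique Gᶜ S :=
  fun _ hu _ hv huv => (G.compl_adj _ _).mpr ⟨huv, hS hu hv huv⟩

lemma ncard_closedNbhdIn_le_two [Finite V] {G : SimpleGraph V} {X : Set V}
    (hsmall : ∀ C, GIsComponentOf G X C → C.ncard ≤ 2) {x : V} (hx : x ∈ X) :
    (closedNbhdIn G X x).ncard ≤ 2 := by
  obtain ⟨C, hC, hxC⟩ := GIsComponentOf.exists_mem G hx
  refine le_trans (Set.ncard_le_ncard ?_) (hsmall C hC)
  exact Set.insert_subset hxC fun y hy => hC.mem_of_adj hxC hy.2 hy.1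

lemma eq_or_eq_of_ncard_le_two [Finite V] {s : Set V} (hs : s.ncard ≤ 2) {a b c : V}
    (ha : a ∈ s) (hb : b ∈ s) (hc : c ∈ s) (hab : a ≠ b) : c = a ∨ c = b := by
  by_contra! h
  exact absurd ((Set.two_lt_ncard_iff).mpr ⟨a, b, c, ha, hb, hc, hab, h.1.symm, h.2.symm⟩)
    (not_lt.mpr hs)

/-- In `some (y, b)`, the vertex `y` belongs to the stable set if `b = false` and to the clique
if `b = true`. -/
def ySide (G : SimpleGraph V) (Y : Set V) : Option (V × Bool) → Set V
  | none => Y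
  | some (y, false) => Y \ closedNbhdIn Gᶜ Y y
  | some (y, true) => Y \ Gᶜ.neighborSet y

namespace GIsGoodPartition

variable [Finite V] {G : SimpleGraph V} {X Y : Set V}

lemma not_adj_of_adj_of_adj (hP : GIsGoodPartition G X Y) {x₀ x₁ y : V} (hx₀ : x₀ ∈ X)
    (hx₁ : x₁ ∈ X) (hy : y ∈ Y) (hx : G.Adj x₀ x₁) (hy₀ : G.Adj x₀ y) : ¬ G.Adj x₁ y := by
  intro hy₁
  obtain ⟨CX, hCX, hx₀C⟩ := GIsComponentOf.exists_mem G hx₀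
  obtain ⟨CY, hCY, hyC⟩ := GIsComponentOf.exists_mem Gᶜ hy
  have hx₁C : x₁ ∈ CX := hCX.mem_of_adj hx₀C hx₁ hx
  have hne : (x₀, y) ≠ (x₁, y) := fun h => hx.ne (congrArg Prod.fst h)
  have hpairs : ({(x₀, y), (x₁, y)} : Set (V × V)) ⊆
      {p : V × V | p.1 ∈ CX ∧ p.2 ∈ CY ∧ (p.1 = y ∨ p.2 = y) ∧ G.Adj p.1 p.2} := by
    simp only [Set.insert_subset_iff, Set.singleton_subset_iff, Set.mem_ofPred_eq, or_true,
      true_and]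
    exact ⟨⟨hx₀C, hyC, hy₀⟩, hx₁C, hyC, hy₁⟩
  have := (Set.ncard_pair hne).symm.trans_le (Set.ncard_le_ncard hpairs (Set.toFinite _))
  have := (hP.2.2.2.2 CX CY hCX hCY y (Or.inr hyC)).1
  omega

lemma eq_closedNbhdIn (hP : GIsGoodPartition G X Y) {K : Set V} (hK : GIsClique G K)
    {x₀ x₁ : V} (hx₀ : x₀ ∈ K ∩ X) (hx₁ : x₁ ∈ K ∩ X) (hne : x₀ ≠ x₁) :
    K = closedNbhdIn G X x₀ := by
  have hKX : K ⊆ X := by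
    intro z hz
    by_contra hzX
    have hzY : z ∈ Y := (hP.2.1.symm ▸ Set.mem_univ z : z ∈ X ∪ Y).resolve_left hzX
    exact hP.not_adj_of_adj_of_adj hx₀.2 hx₁.2 hzY (hK hx₀.1 hx₁.1 hne)
      (hK hx₀.1 hz fun h => hzX (h ▸ hx₀.2)) (hK hx₁.1 hz fun h => hzX (h ▸ hx₁.2))
  refine (Set.inter_eq_left.mpr hKX ▸ hK.inter_subset_closedNbhdIn X hx₀.1).antisymm ?_
  have hsmall := ncard_closedNbhdIn_le_two hP.2.2.1 hx₀.2
  intro z hz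
  rcases eq_or_eq_of_ncard_le_two hsmall (Set.mem_insert x₀ _)
    (hK.inter_subset_closedNbhdIn X hx₀.1 hx₁) hz hne with rfl | rfl
  exacts [hx₀.1, hx₁.1]

lemma exists_ySide (hP : GIsGoodPartition G X Y) {K S : Set V} (hK : GIsClique G K)
    (hS : GIsStable G S) (hKS : Disjoint K S) :
    ∃ o, K ∩ Y ⊆ ySide G Y o ∧ Disjoint S (ySide G Y o) := by
  by_cases hSY : Disjoint S Y
  · exact ⟨none, Set.inter_subset_right, hSY⟩
  obtain ⟨s, hsS, hsY⟩ := Set.not_disjoint_iff.mp hSY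
  have hSN : S ∩ Y ⊆ closedNbhdIn Gᶜ Y s := hS.isClique_compl.inter_subset_closedNbhdIn Y hsS
  by_cases hKN : Disjoint K (closedNbhdIn Gᶜ Y s)
  · refine ⟨some (s, false), fun z hz => ⟨hz.2, hKN.notMem_of_mem_left hz.1⟩, ?_⟩
    exact Set.disjoint_left.mpr fun z hzS hz => hz.2 (hSN ⟨hzS, hz.1⟩)
  obtain ⟨y, hyK, hyN⟩ := Set.not_disjoint_iff.mp hKN
  have hys : y ≠ s := hKS.ne_of_mem hyK hsS
  refine ⟨some (y, true), fun z ⟨hzK, hzY⟩ => ⟨hzY, fun hyz => ?_⟩, ?_⟩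
  · have ⟨hne, hnadj⟩ := (G.compl_adj y z).mp hyz
    exact hnadj (hK hyK hzK hne)
  -- `y` and every vertex of `S ∩ Y` lie in the anticomponent of `s`, which has only two vertices
  refine Set.disjoint_left.mpr fun z hzS ⟨hzY, hzy⟩ => hzy ?_
  have hsmall := ncard_closedNbhdIn_le_two hP.2.2.2.1 hsY
  rcases eq_or_eq_of_ncard_le_two hsmall (Set.mem_insert s _) hyN (hSN ⟨hzS, hzY⟩) hys.symm
    with rfl | rfl
  · exact Gᶜ.adj_symm (hyN.resolve_left hys).1
  · exact absurd hzS (hKS.notMem_of_mem_left hyK)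

end GIsGoodPartition

open Classical in
noncomputable def separatorSides [Fintype V] (G : SimpleGraph V) (X Y : Set V) : Finset (Set V) :=
  (Finset.univ.image fun p : Option V × Option (V × Bool) =>
      p.1.elim ∅ singleton ∪ ySide G Y p.2) ∪
    Finset.univ.image (closedNbhdIn G X)

lemma card_separatorSides_le [Fintype V] (G : SimpleGraph V) (X Y : Set V) :
    (separatorSides G X Y).card ≤ 3 * (Fintype.card V + 1) ^ 2 := by
  classical
  calc (separatorSides G X Y).card
      ≤ Fintype.card (Option V × Option (V × Bool)) + Fintype.card V :=
        (Finset.card_union_le _ _).trans (add_le_add Finset.card_image_le Finset.card_image_le)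
    _ = (Fintype.card V + 1) * (2 * Fintype.card V + 1) + Fintype.card V := by
        simp only [Fintype.card_prod, Fintype.card_option, Fintype.card_bool]; ring
    _ ≤ 3 * (Fintype.card V + 1) ^ 2 := by nlinarith

lemma GIsGoodPartition.exists_mem_separatorSides [Fintype V] {G : SimpleGraph V} {X Y : Set V}
    (hP : GIsGoodPartition G X Y) {K S : Set V} (hK : GIsClique G K) (hS : GIsStable G S)
    (hKS : Disjoint K S) : ∃ U ∈ separatorSides G X Y, K ⊆ U ∧ Disjoint S U := by
  by_cases hKX : (K ∩ X).Subsingleton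
  · obtain ⟨o, hKY, hSY⟩ := hP.exists_ySide hK hS hKS
    obtain ⟨ox, hox⟩ : ∃ ox : Option V, K ∩ X = ox.elim ∅ singleton := by
      rcases hKX.eq_empty_or_singleton with h | ⟨x, h⟩
      exacts [⟨none, h⟩, ⟨some x, h⟩]
    refine ⟨_, Finset.mem_union_left _ (Finset.mem_image_of_mem _ (Finset.mem_univ (ox, o))),
      fun z hz => ?_, Set.disjoint_union_right.mpr
        ⟨hox ▸ hKS.symm.mono_right Set.inter_subset_left, hSY⟩⟩
    rcases (hP.2.1.symm ▸ Set.mem_univ z : z ∈ X ∪ Y) with hzX | hzY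
    exacts [Or.inl (hox ▸ ⟨hz, hzX⟩), Or.inr (hKY ⟨hz, hzY⟩)]
  · simp only [Set.Subsingleton, not_forall] at hKX
    obtain ⟨x₀, hx₀, x₁, hx₁, hne⟩ := hKX
    refine ⟨K, Finset.mem_union_right _ (Finset.mem_image.mpr ⟨x₀, Finset.mem_univ _, ?_⟩),
      subset_rfl, hKS.symm⟩
    exact (hP.eq_closedNbhdIn hK hx₀ hx₁ hne).symm

/-- A finite simple graph admitting a good partition admits a CS-separator of
size at most 3(|V(G)| + 1)². -/
theorem stmt_8 {V : Type} [Fintype V] (G : SimpleGraph V)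
    (h : ∃ X Y : Set V, GIsGoodPartition G X Y) :
    ∃ F : Finset (Set V × Set V), GIsCSSeparator G F ∧
      F.card ≤ 3 * (Fintype.card V + 1) ^ 2 := by
  classical
  obtain ⟨X, Y, hP⟩ := h
  refine ⟨(separatorSides G X Y).image fun U => (U, Uᶜ), ⟨?_, ?_⟩, ?_⟩
  · simp only [Finset.mem_image]
    rintro _ ⟨U, -, rfl⟩
    exact ⟨disjoint_compl_right, Set.union_compl_self U⟩
  · intro K S hK hS hKS
    obtain ⟨U, hU, hKU, hSU⟩ := hP.exists_mem_separatorSides hK hS hKS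
    exact ⟨(U, Uᶜ), Finset.mem_image_of_mem _ hU, hKU, hSU.subset_compl_right⟩
  · exact Finset.card_image_le.trans (card_separatorSides_le G X Y)
end

section
/- Let 𝒞 be a class of finite simple graphs, k ≥ 1 and m ≥ 1. If every graph of 𝒞 admits a CS-separator of size at most m, then every trigraph T of 𝒞^{≤k} admits a CS-separator of size at most m^{k²}. -/
/-- A trigraph on a finite vertex set `verts` drawn from an ambient type `α`:
a symmetric adjacency function with values in {-1, 0, 1}. (Graphs are the trigraphs with
no value 0 between distinct vertices of `verts`.) -/
structure FTG (α : Type) where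
  verts : Finset α
  theta : α → α → ℤ
  symm : ∀ u v, theta u v = theta v u
  range : ∀ u v, theta u v = -1 ∨ theta u v = 0 ∨ theta u v = 1

namespace FTG

variable {α : Type} [DecidableEq α]

def StrongAdj (T : FTG α) (u v : α) : Prop :=
  u ∈ T.verts ∧ v ∈ T.verts ∧ u ≠ v ∧ T.theta u v = 1

def StrongAntiAdj (T : FTG α) (u v : α) : Prop :=
  u ∈ T.verts ∧ v ∈ T.verts ∧ u ≠ v ∧ T.theta u v = -1

def Switchable (T : FTG α) (u v : α) : Prop :=
  u ∈ T.verts ∧ v ∈ T.verts ∧ u ≠ v ∧ T.theta u v = 0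

def Adj (T : FTG α) (u v : α) : Prop :=
  u ∈ T.verts ∧ v ∈ T.verts ∧ u ≠ v ∧ 0 ≤ T.theta u v

def AntiAdj (T : FTG α) (u v : α) : Prop :=
  u ∈ T.verts ∧ v ∈ T.verts ∧ u ≠ v ∧ T.theta u v ≤ 0

/-- `T` is a (simple) graph: no switchable pair. -/
def IsGraph (T : FTG α) : Prop :=
  ∀ u v, u ∈ T.verts → v ∈ T.verts → u ≠ v → T.theta u v ≠ 0

/-- `G` is a realization of `T`: a graph on the same vertex set keeping all strong edges
and strong antiedges. -/
def IsRealization (T G : FTG α) : Prop :=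
  G.verts = T.verts ∧ G.IsGraph ∧
  ∀ u v, u ∈ T.verts → v ∈ T.verts → u ≠ v →
    (T.theta u v = 1 → G.theta u v = 1) ∧ (T.theta u v = -1 → G.theta u v = -1)

def IsClique (T : FTG α) (K : Set α) : Prop := K ⊆ ↑T.verts ∧ K.Pairwise T.Adj

def IsStable (T : FTG α) (S : Set α) : Prop := S ⊆ ↑T.verts ∧ S.Pairwise T.AntiAdj

def IsCut (T : FTG α) (c : Set α × Set α) : Prop :=
  Disjoint c.1 c.2 ∧ c.1 ∪ c.2 = ↑T.verts

def IsCSSeparator (T : FTG α) (F : Finset (Set α × Set α)) : Prop :=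
  (∀ c ∈ F, T.IsCut c) ∧
  ∀ K S : Set α, T.IsClique K → T.IsStable S → Disjoint K S →
    ∃ c ∈ F, K ⊆ c.1 ∧ S ⊆ c.2

/-- Membership in the class `𝒞^{≤k}`: the vertex set has a partition into parts of size
at most `k`, all pairs inside a part are switchable, no switchable pair crosses two parts,
and some realization belongs to `𝒞`. -/
def InCk (C : Set (FTG α)) (k : ℕ) (T : FTG α) : Prop :=
  (∃ P : Finset (Finset α),
    P.biUnion id = T.verts ∧
    (∀ p ∈ P, ∀ q ∈ P, p ≠ q → Disjoint p q) ∧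
    (∀ p ∈ P, 1 ≤ p.card ∧ p.card ≤ k) ∧
    (∀ p ∈ P, ∀ u ∈ p, ∀ v ∈ p, u ≠ v → T.theta u v = 0) ∧
    (∀ u v, u ∈ T.verts → v ∈ T.verts → u ≠ v → T.theta u v = 0 →
      ∀ p ∈ P, (u ∈ p ↔ v ∈ p))) ∧
  ∃ G ∈ C, T.IsRealization G

/-- `T` is the generalized `k`-join of `T1` and `T2`. -/
def IsGenJoin (k : ℕ) (T T1 T2 : FTG α) : Prop :=
  ∃ (r s : ℕ) (A : Fin r → Finset α) (B : Fin s → Finset α) (a : Fin r → α) (b : Fin s → α),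
    1 ≤ r ∧ r ≤ k ∧ 1 ≤ s ∧ s ≤ k ∧
    (∀ j, (A j).Nonempty) ∧ (∀ i, (B i).Nonempty) ∧
    (∀ j j', j ≠ j' → Disjoint (A j) (A j')) ∧
    (∀ i i', i ≠ i' → Disjoint (B i) (B i')) ∧
    Function.Injective a ∧ Function.Injective b ∧
    (∀ i j, b i ∉ A j) ∧ (∀ j i, a j ∉ B i) ∧
    Disjoint T1.verts T2.verts ∧
    T1.verts = Finset.univ.biUnion A ∪ Finset.univ.image b ∧
    T2.verts = Finset.univ.biUnion B ∪ Finset.univ.image a ∧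
    (∀ i i', i ≠ i' → T1.theta (b i) (b i') = 0) ∧
    (∀ j j', j ≠ j' → T2.theta (a j) (a j') = 0) ∧
    (∀ i j, ((∀ u ∈ A j, T1.theta (b i) u = 1) ∧ (∀ u ∈ B i, T2.theta (a j) u = 1)) ∨
            ((∀ u ∈ A j, T1.theta (b i) u = -1) ∧ (∀ u ∈ B i, T2.theta (a j) u = -1))) ∧
    T.verts = Finset.univ.biUnion A ∪ Finset.univ.biUnion B ∧
    (∀ u ∈ Finset.univ.biUnion A, ∀ v ∈ Finset.univ.biUnion A, T.theta u v = T1.theta u v) ∧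
    (∀ u ∈ Finset.univ.biUnion B, ∀ v ∈ Finset.univ.biUnion B, T.theta u v = T2.theta u v) ∧
    (∀ j i, ∀ u ∈ A j, ∀ v ∈ B i,
      ((∀ x ∈ A j, T1.theta (b i) x = 1) → T.theta u v = 1) ∧
      ((∀ x ∈ A j, T1.theta (b i) x = -1) → T.theta u v = -1))

/-- The closure of `𝒞^{≤k}` under generalized `k`-joins. -/
inductive InClosure (C : Set (FTG α)) (k : ℕ) : FTG α → Prop where
  | base (T : FTG α) (h : InCk C k T) : InClosure C k T
  | join (T T1 T2 : FTG α) (h1 : InClosure C k T1) (h2 : InClosure C k T2)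
      (h : IsGenJoin k T T1 T2) : InClosure C k T

/-- `𝒞` is closed under induced subgraphs. -/
def ClosedUnderInduced (C : Set (FTG α)) : Prop :=
  ∀ G ∈ C, ∀ s : Finset α, s ⊆ G.verts → FTG.mk s G.theta G.symm G.range ∈ C

/-- `𝒞` is `c`-good: every member with at least 2 vertices, with any `c`-balanced weight
function, has a biclique or a complement biclique of weight at least `c` times the total
weight. -/
def IsGood (c : ℝ) (C : Set (FTG α)) : Prop :=
  ∀ G ∈ C, 2 ≤ G.verts.card → ∀ w : α → ℕ,
    (∀ v ∈ G.verts, (w v : ℝ) ≤ c * ∑ x ∈ G.verts, (w x : ℝ)) →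
    ∃ V1 V2 : Finset α, V1 ⊆ G.verts ∧ V2 ⊆ G.verts ∧ Disjoint V1 V2 ∧
      ((∀ u ∈ V1, ∀ v ∈ V2, G.StrongAdj u v) ∨ (∀ u ∈ V1, ∀ v ∈ V2, G.StrongAntiAdj u v)) ∧
      c * (∑ x ∈ G.verts, (w x : ℝ)) ≤ min (∑ x ∈ V1, (w x : ℝ)) (∑ x ∈ V2, (w x : ℝ))

end FTG

/-!
Number the vertices inside each part of the partition, so that every vertex gets a colour in
`Fin k` and switchable pairs get distinct colours. Inside one colour class a clique (stable set)
of `T` has no switchable pair, so it is a clique (stable set) of the realization `G ∈ 𝒞`. For a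
clique `K` and a stable set `S`, pick for every pair of colours `(i, j)` a cut of `G`'s separator
separating the colour-`i` part of `K` from the colour-`j` part of `S`; put a vertex of colour `i`
on the clique side iff it lies on the clique side of all `k` cuts chosen for the pairs `(i, ·)`.
There are at most `m ^ (k * k)` such choices of cuts.
-/

theorem Finset.exists_fin_coloring_injOn_parts {α : Type} {k : ℕ} (hk : 0 < k)
    {P : Finset (Finset α)} (hdisj : (P : Set (Finset α)).PairwiseDisjoint id)
    (hcard : ∀ p ∈ P, p.card ≤ k) :
    ∃ col : α → Fin k, ∀ p ∈ P, Set.InjOn col p := by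
  classical
  have hnum : ∀ p : Finset α, ∃ f : α → Fin k, p.card ≤ k → Set.InjOn f p := fun p => by
    by_cases hp : p.card ≤ k
    · refine ⟨fun v => if hv : v ∈ p then Fin.castLE hp (p.equivFin ⟨v, hv⟩) else ⟨0, hk⟩,
        fun _ => ?_⟩
      intro u hu v hv huv
      simp only [Finset.mem_coe] at hu hv
      simp only [dif_pos hu, dif_pos hv] at huv
      exact Subtype.ext_iff.mp (p.equivFin.injective (Fin.castLE_injective hp huv))
    · exact ⟨fun _ => ⟨0, hk⟩, fun h => absurd h hp⟩
  choose f hf using hnum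
  refine ⟨fun v => if h : ∃ p ∈ P, v ∈ p then f h.choose v else ⟨0, hk⟩, ?_⟩
  have hcol : ∀ p ∈ P, ∀ v ∈ p,
      (if h : ∃ p ∈ P, v ∈ p then f h.choose v else ⟨0, hk⟩) = f p v := by
    intro p hp v hv
    have h : ∃ p ∈ P, v ∈ p := ⟨p, hp, hv⟩
    rw [dif_pos h, hdisj.elim_finset h.choose_spec.1 hp v h.choose_spec.2 hv]
  intro p hp u hu v hv huv
  dsimp only at huv
  rw [hcol p hp u hu, hcol p hp v hv] at huv
  exact hf p (hcard p hp) hu hv huv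

namespace FTG

variable {α : Type}

theorem InCk.exists_coloring [DecidableEq α] {C : Set (FTG α)} {k : ℕ} {T : FTG α}
    (hT : T.InCk C k) (hk : 0 < k) :
    ∃ col : α → Fin k, ∀ u ∈ T.verts, ∀ v ∈ T.verts, u ≠ v → col u = col v →
      T.theta u v ≠ 0 := by
  obtain ⟨⟨P, hcover, hdisj, hcard, -, hcross⟩, -⟩ := hT
  obtain ⟨col, hcol⟩ := Finset.exists_fin_coloring_injOn_parts hk
    (fun p hp q hq hpq => hdisj p hp q hq hpq) (fun p hp => (hcard p hp).2)
  refine ⟨col, fun u hu v hv huv hcuv hsw => huv ?_⟩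
  obtain ⟨p, hp, hup⟩ : ∃ p ∈ P, u ∈ p := by simpa [← hcover] using hu
  exact hcol p hp hup ((hcross u v hu hv huv hsw p hp).mp hup) hcuv

theorem IsClique.mono {T : FTG α} {K L : Set α} (hK : T.IsClique K) (hLK : L ⊆ K) :
    T.IsClique L :=
  ⟨hLK.trans hK.1, hK.2.mono hLK⟩

theorem IsStable.mono {T : FTG α} {S L : Set α} (hS : T.IsStable S) (hLS : L ⊆ S) :
    T.IsStable L :=
  ⟨hLS.trans hS.1, hS.2.mono hLS⟩

theorem IsRealization.isClique {T G : FTG α} (hG : T.IsRealization G) {K : Set α}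
    (hK : T.IsClique K) (hstrong : K.Pairwise fun u v => T.theta u v ≠ 0) : G.IsClique K := by
  obtain ⟨hverts, -, htheta⟩ := hG
  refine ⟨hverts ▸ hK.1, fun u hu v hv huv => ?_⟩
  obtain ⟨huT, hvT, -, hadj⟩ := hK.2 hu hv huv
  have h1 : T.theta u v = 1 := by
    rcases T.range u v with h | h | h
    · omega
    · exact absurd h (hstrong hu hv huv)
    · exact h
  exact ⟨hverts ▸ huT, hverts ▸ hvT, huv, by rw [(htheta u v huT hvT huv).1 h1]; norm_num⟩

theorem IsRealization.isStable {T G : FTG α} (hG : T.IsRealization G) {S : Set α}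
    (hS : T.IsStable S) (hstrong : S.Pairwise fun u v => T.theta u v ≠ 0) : G.IsStable S := by
  obtain ⟨hverts, -, htheta⟩ := hG
  refine ⟨hverts ▸ hS.1, fun u hu v hv huv => ?_⟩
  obtain ⟨huT, hvT, -, hanti⟩ := hS.2 hu hv huv
  have h1 : T.theta u v = -1 := by
    rcases T.range u v with h | h | h
    · exact h
    · exact absurd h (hstrong hu hv huv)
    · omega
  exact ⟨hverts ▸ huT, hverts ▸ hvT, huv, by rw [(htheta u v huT hvT huv).2 h1]; norm_num⟩

section ProductCut

variable {ι : Type}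

def productCut (T : FTG α) (col : α → ι) (g : ι × ι → Set α × Set α) : Set α × Set α :=
  ({v | v ∈ T.verts ∧ ∀ j, v ∈ (g (col v, j)).1},
    {v | v ∈ T.verts ∧ ¬ ∀ j, v ∈ (g (col v, j)).1})

theorem isCut_productCut (T : FTG α) (col : α → ι) (g : ι × ι → Set α × Set α) :
    T.IsCut (T.productCut col g) := by
  refine ⟨Set.disjoint_left.mpr fun v hv hv' => hv'.2 hv.2, ?_⟩
  ext v
  simp only [productCut, Set.mem_union, Set.mem_ofPred_eq, Finset.mem_coe]
  tauto

theorem IsCSSeparator.productCut [Fintype ι] [DecidableEq ι] {T G : FTG α}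
    {F : Finset (Set α × Set α)} (hF : G.IsCSSeparator F) (col : α → ι)
    (hclique : ∀ K, T.IsClique K → ∀ i, G.IsClique {v ∈ K | col v = i})
    (hstable : ∀ S, T.IsStable S → ∀ i, G.IsStable {v ∈ S | col v = i}) :
    T.IsCSSeparator ((Fintype.piFinset fun _ => F).image (T.productCut col)) := by
  refine ⟨fun c hc => ?_, fun K S hK hS hKS => ?_⟩
  · obtain ⟨g, -, rfl⟩ := Finset.mem_image.mp hc
    exact isCut_productCut T col g
  have hsep : ∀ ij : ι × ι, ∃ c ∈ F,
      {v ∈ K | col v = ij.1} ⊆ c.1 ∧ {v ∈ S | col v = ij.2} ⊆ c.2 := fun ij =>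
    hF.2 _ _ (hclique K hK ij.1) (hstable S hS ij.2)
      (hKS.mono (Set.sep_subset _ _) (Set.sep_subset _ _))
  choose g hgF hgK hgS using hsep
  refine ⟨T.productCut col g, Finset.mem_image_of_mem _ (Fintype.mem_piFinset.mpr hgF), ?_, ?_⟩
  · exact fun v hv => ⟨hK.1 hv, fun j => hgK (col v, j) ⟨hv, rfl⟩⟩
  · refine fun v hv => ⟨hS.1 hv, fun hall => ?_⟩
    exact Set.disjoint_left.mp (hF.1 _ (hgF (col v, col v))).1 (hall (col v))
      (hgS (col v, col v) ⟨hv, rfl⟩)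

theorem card_image_productCut_le [Fintype ι] [DecidableEq ι] (T : FTG α) (col : α → ι)
    (F : Finset (Set α × Set α)) :
    ((Fintype.piFinset fun _ : ι × ι => F).image (T.productCut col)).card ≤
      F.card ^ (Fintype.card ι ^ 2) := by
  calc _ ≤ (Fintype.piFinset fun _ : ι × ι => F).card := Finset.card_image_le
    _ = F.card ^ (Fintype.card ι ^ 2) := by
      rw [Fintype.card_piFinset, Finset.prod_const, Finset.card_univ, Fintype.card_prod, sq]

end ProductCut

end FTG

theorem stmt_11_general {α : Type} [DecidableEq α] (C : Set (FTG α))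
    (k m : ℕ) (hk : 1 ≤ k)
    (h : ∀ G ∈ C, ∃ F, FTG.IsCSSeparator G F ∧ F.card ≤ m) :
    ∀ T : FTG α, FTG.InCk C k T →
      ∃ F, FTG.IsCSSeparator T F ∧ F.card ≤ m ^ (k ^ 2) := by
  intro T hT
  obtain ⟨col, hcol⟩ := hT.exists_coloring hk
  obtain ⟨G, hGC, hG⟩ := hT.2
  obtain ⟨F, hF, hFcard⟩ := h G hGC
  have hstrong : ∀ L : Set α, L ⊆ T.verts → ∀ i, {v ∈ L | col v = i}.Pairwise
      fun u v => T.theta u v ≠ 0 :=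
    fun L hL i u hu v hv huv => hcol u (hL hu.1) v (hL hv.1) huv (hu.2.trans hv.2.symm)
  refine ⟨_, hF.productCut col
    (fun K hK i => hG.isClique (hK.mono (Set.sep_subset _ _)) (hstrong K hK.1 i))
    (fun S hS i => hG.isStable (hS.mono (Set.sep_subset _ _)) (hstrong S hS.1 i)), ?_⟩
  calc _ ≤ F.card ^ (Fintype.card (Fin k) ^ 2) := FTG.card_image_productCut_le T col F
    _ ≤ m ^ (k ^ 2) := by
      rw [Fintype.card_fin]
      exact Nat.pow_le_pow_left hFcard _

/-- If every graph of a class 𝒞 admits a CS-separator of size at most m,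
then every trigraph of 𝒞^{≤k} admits a CS-separator of size at most m^(k²). -/
theorem stmt_11 {α : Type} [DecidableEq α] (C : Set (FTG α))
    (hgraph : ∀ G ∈ C, FTG.IsGraph G) (k m : ℕ) (hk : 1 ≤ k) (hm : 1 ≤ m)
    (h : ∀ G ∈ C, ∃ F, FTG.IsCSSeparator G F ∧ F.card ≤ m) :
    ∀ T : FTG α, FTG.InCk C k T →
      ∃ F, FTG.IsCSSeparator T F ∧ F.card ≤ m ^ (k ^ 2) :=
  stmt_11_general C k m hk h
end

section
/- Let G be a finite simple graph admitting a CS-separator of size at most m, where m ≥ 1, and let k ≥ 1. Then there exists a family of at most m^k cuts of G such that for every clique K and all stable sets S1, …, Sk of G with K ∩ (S1 ∪ … ∪ Sk) = ∅, some cut (U, W) of the family satisfies K ⊆ U and S1 ∪ … ∪ Sk ⊆ W. -/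
/-! Given cuts `(U₁, W₁), …, (U_k, W_k)`, the pair `(U₁ ∩ ⋯ ∩ U_k, W₁ ∪ ⋯ ∪ W_k)` is again a cut.
Choosing for each `Sᵢ` a cut of the CS-separator that separates `K` from `Sᵢ`, this combined cut
separates `K` from `S₁ ∪ ⋯ ∪ S_k`, and there are at most `m ^ k` ways to make the choices. -/

variable {V : Type}

def cutMeet {ι : Type*} (c : ι → Set V × Set V) : Set V × Set V :=
  (⋂ i, (c i).1, ⋃ i, (c i).2)

theorem GIsCut.cutMeet {ι : Type*} {c : ι → Set V × Set V} (hc : ∀ i, GIsCut (c i)) :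
    GIsCut (cutMeet c) := by
  refine ⟨Set.disjoint_iUnion_right.2 fun i => (hc i).1.mono_left (Set.iInter_subset _ i), ?_⟩
  refine Set.eq_univ_of_forall fun x => ?_
  by_cases hx : ∀ i, x ∈ (c i).1
  · exact Or.inl (Set.mem_iInter.2 hx)
  · obtain ⟨i, hi⟩ := not_forall.1 hx
    have hx : x ∈ (c i).1 ∪ (c i).2 := (hc i).2 ▸ Set.mem_univ x
    exact Or.inr (Set.mem_iUnion.2 ⟨i, hx.resolve_left hi⟩)

open Classical in
noncomputable def cutMeets (F : Finset (Set V × Set V)) (ι : Type*) [Fintype ι] [DecidableEq ι] :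
    Finset (Set V × Set V) :=
  Finset.univ.image fun g : ι → F => cutMeet fun i => (g i).1

section cutMeets

variable {ι : Type*} [Fintype ι] [DecidableEq ι]

theorem card_cutMeets_le (F : Finset (Set V × Set V)) :
    (cutMeets F ι).card ≤ F.card ^ Fintype.card ι :=
  Finset.card_image_le.trans (by simp)

theorem GIsCut.of_mem_cutMeets {F : Finset (Set V × Set V)} (hF : ∀ c ∈ F, GIsCut c)
    {c : Set V × Set V} (hc : c ∈ cutMeets F ι) : GIsCut c := by
  obtain ⟨g, -, rfl⟩ := Finset.mem_image.1 hc
  exact GIsCut.cutMeet fun i => hF _ (g i).2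

theorem exists_mem_cutMeets_subset {F : Finset (Set V × Set V)} {K : Set V} {S : ι → Set V}
    (hsep : ∀ i, ∃ c ∈ F, K ⊆ c.1 ∧ S i ⊆ c.2) :
    ∃ c ∈ cutMeets F ι, K ⊆ c.1 ∧ (⋃ i, S i) ⊆ c.2 := by
  choose c hcF hKc hSc using hsep
  refine ⟨cutMeet c, Finset.mem_image.2 ⟨fun i => ⟨c i, hcF i⟩, Finset.mem_univ _, rfl⟩, ?_, ?_⟩
  · exact Set.subset_iInter hKc
  · exact Set.iUnion_mono hSc

end cutMeets

theorem stmt_12_general {V : Type} (G : SimpleGraph V) (m k : ℕ)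
    (h : ∃ F : Finset (Set V × Set V), GIsCSSeparator G F ∧ F.card ≤ m) :
    ∃ F' : Finset (Set V × Set V), F'.card ≤ m ^ k ∧ (∀ c ∈ F', GIsCut c) ∧
      ∀ (K : Set V) (S : Fin k → Set V), GIsClique G K → (∀ i, GIsStable G (S i)) →
        Disjoint K (⋃ i, S i) → ∃ c ∈ F', K ⊆ c.1 ∧ (⋃ i, S i) ⊆ c.2 := by
  obtain ⟨F, ⟨hcut, hsep⟩, hcard⟩ := h
  refine ⟨cutMeets F (Fin k), ?_, fun c hc => GIsCut.of_mem_cutMeets hcut hc, ?_⟩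
  · calc (cutMeets F (Fin k)).card ≤ F.card ^ Fintype.card (Fin k) := card_cutMeets_le F
      _ ≤ m ^ k := by rw [Fintype.card_fin]; exact Nat.pow_le_pow_left hcard k
  · intro K S hK hS hdisj
    exact exists_mem_cutMeets_subset fun i =>
      hsep K (S i) hK (hS i) (hdisj.mono_right (Set.subset_iUnion S i))

/-- From a CS-separator of size at most m one gets a family of at most m^k
cuts separating every clique from every union of at most k stable sets. -/
theorem stmt_12 {V : Type} [Fintype V] (G : SimpleGraph V) (m k : ℕ)
    (hm : 1 ≤ m) (hk : 1 ≤ k)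
    (h : ∃ F : Finset (Set V × Set V), GIsCSSeparator G F ∧ F.card ≤ m) :
    ∃ F' : Finset (Set V × Set V), F'.card ≤ m ^ k ∧ (∀ c ∈ F', GIsCut c) ∧
      ∀ (K : Set V) (S : Fin k → Set V), GIsClique G K → (∀ i, GIsStable G (S i)) →
        Disjoint K (⋃ i, S i) → ∃ c ∈ F', K ⊆ c.1 ∧ (⋃ i, S i) ⊆ c.2 :=
  stmt_12_general G m k h
end

section
/- Let G be a finite simple graph admitting a CS-separator of size at most m, where m ≥ 1, and let k ≥ 1. Then there exists a family of at most m^{k²} cuts of G such that for all cliques K1, …, Kk and all stable sets S1, …, Sk of G with (K1 ∪ … ∪ Kk) ∩ (S1 ∪ … ∪ Sk) = ∅, some cut (U, W) of the family satisfies K1 ∪ … ∪ Kk ⊆ U and S1 ∪ … ∪ Sk ⊆ W. -/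
variable {V : Type}

/-!
Separate each pair `(Kᵢ, Sⱼ)` by a cut `(Uᵢⱼ, Wᵢⱼ)` of the given CS-separator and take
`U = ⋃ᵢ ⋂ⱼ Uᵢⱼ`. Every `Kᵢ` lies in `⋂ⱼ Uᵢⱼ`, while a vertex of `Sⱼ` lies in `Wᵢⱼ`, hence outside
`Uᵢⱼ`, for every `i`; so the cut `(U, V \ U)` separates `⋃ Kᵢ` from `⋃ Sⱼ`. The cut only depends
on the choice of `k²` cuts of the separator, which gives at most `m ^ (k ^ 2)` cuts.
-/

open Finset

section UnionInterCuts

variable {ι κ : Type*}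

def unionInterCut (g : ι × κ → Set V × Set V) : Set V × Set V :=
  (⋃ i, ⋂ j, (g (i, j)).1, (⋃ i, ⋂ j, (g (i, j)).1)ᶜ)

lemma gIsCut_unionInterCut (g : ι × κ → Set V × Set V) : GIsCut (unionInterCut g) :=
  ⟨disjoint_compl_right, Set.union_compl_self _⟩

lemma iUnion_subset_unionInterCut_fst {g : ι × κ → Set V × Set V} {K : ι → Set V}
    (hK : ∀ i j, K i ⊆ (g (i, j)).1) : ⋃ i, K i ⊆ (unionInterCut g).1 :=
  Set.iUnion_mono fun i => Set.subset_iInter (hK i)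

lemma iUnion_subset_unionInterCut_snd {g : ι × κ → Set V × Set V} {S : κ → Set V}
    (hg : ∀ p, Disjoint (g p).1 (g p).2) (hS : ∀ i j, S j ⊆ (g (i, j)).2) :
    ⋃ j, S j ⊆ (unionInterCut g).2 := by
  refine Set.iUnion_subset fun j x hx => ?_
  simp only [unionInterCut, Set.mem_compl_iff, Set.mem_iUnion, Set.mem_iInter, not_exists]
  exact fun i hi => Set.disjoint_left.mp (hg (i, j)) (hi j) (hS i j hx)

variable [Fintype ι] [Fintype κ]

variable (ι κ) in
open Classical in
noncomputable def unionInterCuts (F : Finset (Set V × Set V)) : Finset (Set V × Set V) :=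
  (Fintype.piFinset fun _ : ι × κ => F).image unionInterCut

lemma card_unionInterCuts_le (F : Finset (Set V × Set V)) :
    #(unionInterCuts ι κ F) ≤ #F ^ (Fintype.card ι * Fintype.card κ) := by
  classical
  calc #(unionInterCuts ι κ F) ≤ #(Fintype.piFinset fun _ : ι × κ => F) := card_image_le
    _ = #F ^ (Fintype.card ι * Fintype.card κ) := by
      rw [Fintype.card_piFinset, prod_const, card_univ, Fintype.card_prod]

lemma gIsCut_of_mem_unionInterCuts {F : Finset (Set V × Set V)} {c : Set V × Set V}
    (hc : c ∈ unionInterCuts ι κ F) : GIsCut c := by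
  classical
  obtain ⟨g, -, rfl⟩ := mem_image.mp hc
  exact gIsCut_unionInterCut g

lemma exists_mem_unionInterCuts_separating {F : Finset (Set V × Set V)}
    (hF : ∀ c ∈ F, Disjoint c.1 c.2) (K : ι → Set V) (S : κ → Set V)
    (hsep : ∀ i j, ∃ c ∈ F, K i ⊆ c.1 ∧ S j ⊆ c.2) :
    ∃ c ∈ unionInterCuts ι κ F, ⋃ i, K i ⊆ c.1 ∧ ⋃ j, S j ⊆ c.2 := by
  classical
  choose g hgF hgK hgS using fun p : ι × κ => hsep p.1 p.2
  exact ⟨unionInterCut g, mem_image_of_mem _ (Fintype.mem_piFinset.mpr hgF),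
    iUnion_subset_unionInterCut_fst fun i j => hgK (i, j),
    iUnion_subset_unionInterCut_snd (fun p => hF _ (hgF p)) fun i j => hgS (i, j)⟩

end UnionInterCuts

theorem stmt_13_general {V : Type} (G : SimpleGraph V) (m k : ℕ)
    (h : ∃ F : Finset (Set V × Set V), GIsCSSeparator G F ∧ F.card ≤ m) :
    ∃ F' : Finset (Set V × Set V), F'.card ≤ m ^ (k ^ 2) ∧ (∀ c ∈ F', GIsCut c) ∧
      ∀ (K : Fin k → Set V) (S : Fin k → Set V),
        (∀ i, GIsClique G (K i)) → (∀ i, GIsStable G (S i)) →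
        Disjoint (⋃ i, K i) (⋃ i, S i) →
        ∃ c ∈ F', (⋃ i, K i) ⊆ c.1 ∧ (⋃ i, S i) ⊆ c.2 := by
  obtain ⟨F, ⟨hFcut, hFsep⟩, hFcard⟩ := h
  refine ⟨unionInterCuts (Fin k) (Fin k) F, ?_, fun c => gIsCut_of_mem_unionInterCuts, ?_⟩
  · calc #(unionInterCuts (Fin k) (Fin k) F) ≤ #F ^ (k * k) := by
          simpa using card_unionInterCuts_le (ι := Fin k) (κ := Fin k) F
      _ ≤ m ^ (k ^ 2) := sq k ▸ Nat.pow_le_pow_left hFcard _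
  · intro K S hK hS hdisj
    refine exists_mem_unionInterCuts_separating (fun c hc => (hFcut c hc).1) K S fun i j => ?_
    exact hFsep (K i) (S j) (hK i) (hS j)
      (hdisj.mono (Set.subset_iUnion K i) (Set.subset_iUnion S j))

/-- From a CS-separator of size at most m one gets a family of at most m^(k²)
cuts separating every union of at most k cliques from every union of at most k stable sets. -/
theorem stmt_13 {V : Type} [Fintype V] (G : SimpleGraph V) (m k : ℕ)
    (hm : 1 ≤ m) (hk : 1 ≤ k)
    (h : ∃ F : Finset (Set V × Set V), GIsCSSeparator G F ∧ F.card ≤ m) :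
    ∃ F' : Finset (Set V × Set V), F'.card ≤ m ^ (k ^ 2) ∧ (∀ c ∈ F', GIsCut c) ∧
      ∀ (K : Fin k → Set V) (S : Fin k → Set V),
        (∀ i, GIsClique G (K i)) → (∀ i, GIsStable G (S i)) →
        Disjoint (⋃ i, K i) (⋃ i, S i) →
        ∃ c ∈ F', (⋃ i, K i) ⊆ c.1 ∧ (⋃ i, S i) ⊆ c.2 :=
  stmt_13_general G m k h
end

section
/- Let k ≥ 1 and let T be the generalized k-join of trigraphs T1 and T2. If T1 admits a CS-separator of size m1 and T2 admits a CS-separator of size m2, then T admits a CS-separator of size at most m1 + m2. -/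
/-!
Collapsing every block `B i` of the join to its marker `b i` maps `T` onto `T1` so that every
pair with distinct images keeps its adjacency or becomes switchable; hence cliques and stable sets
of `T` map to cliques and stable sets of `T1`. If no block meets both a clique `K` and a disjoint
stable set `S`, their images are disjoint, and a cut of `T1` separating the images pulls back to a
cut of `T` separating `K` and `S`. If some block meets both, then no part `A j` does, because the
adjacency between `A j` and `B i` is constant and nonzero; so the same argument works with `T2`.
The pullbacks of the two separators therefore form a CS-separator of `T`.
-/

namespace FTG

variable {α : Type}

structure IsWeakHom (π : α → α) (T T' : FTG α) : Prop where
  mapsTo : Set.MapsTo π T.verts T'.verts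
  theta_image : ∀ x ∈ T.verts, ∀ y ∈ T.verts, π x ≠ π y →
    T'.theta (π x) (π y) = 0 ∨ T'.theta (π x) (π y) = T.theta x y

section WeakHom

variable {π : α → α} {T T' : FTG α}

theorem IsClique.image (hπ : IsWeakHom π T T') {K : Set α} (hK : T.IsClique K) :
    T'.IsClique (π '' K) := by
  refine ⟨hπ.mapsTo.mono_left hK.1 |>.image_subset, ?_⟩
  rintro _ ⟨x, hx, rfl⟩ _ ⟨y, hy, rfl⟩ hxy
  refine ⟨hπ.mapsTo (hK.1 hx), hπ.mapsTo (hK.1 hy), hxy, ?_⟩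
  rcases hπ.theta_image x (hK.1 hx) y (hK.1 hy) hxy with h | h
  · exact h.ge
  · exact h ▸ (hK.2 hx hy (ne_of_apply_ne π hxy)).2.2.2

theorem IsStable.image (hπ : IsWeakHom π T T') {S : Set α} (hS : T.IsStable S) :
    T'.IsStable (π '' S) := by
  refine ⟨hπ.mapsTo.mono_left hS.1 |>.image_subset, ?_⟩
  rintro _ ⟨x, hx, rfl⟩ _ ⟨y, hy, rfl⟩ hxy
  refine ⟨hπ.mapsTo (hS.1 hx), hπ.mapsTo (hS.1 hy), hxy, ?_⟩
  rcases hπ.theta_image x (hS.1 hx) y (hS.1 hy) hxy with h | h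
  · exact h.le
  · exact h ▸ (hS.2 hx hy (ne_of_apply_ne π hxy)).2.2.2

end WeakHom

def pullbackCut (T : FTG α) (π : α → α) (c : Set α × Set α) : Set α × Set α :=
  (↑T.verts ∩ π ⁻¹' c.1, ↑T.verts \ π ⁻¹' c.1)

theorem isCut_pullbackCut (T : FTG α) (π : α → α) (c : Set α × Set α) :
    T.IsCut (pullbackCut T π c) :=
  ⟨Set.disjoint_of_subset_left Set.inter_subset_right Set.disjoint_sdiff_right,
    Set.inter_union_sdiff _ _⟩

theorem IsCSSeparator.exists_pullbackCut {π : α → α} {T T' : FTG α} {F : Finset (Set α × Set α)}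
    (hF : T'.IsCSSeparator F) (hπ : IsWeakHom π T T') {K S : Set α} (hK : T.IsClique K)
    (hS : T.IsStable S) (hKS : Disjoint (π '' K) (π '' S)) :
    ∃ c ∈ F, K ⊆ (pullbackCut T π c).1 ∧ S ⊆ (pullbackCut T π c).2 := by
  obtain ⟨c, hc, hKc, hSc⟩ := hF.2 _ _ (hK.image hπ) (hS.image hπ) hKS
  refine ⟨c, hc, fun x hx => ⟨hK.1 hx, hKc ⟨x, hx, rfl⟩⟩, fun x hx => ⟨hS.1 hx, fun hxc => ?_⟩⟩
  exact Set.disjoint_left.1 (hF.1 c hc).1 hxc (hSc ⟨x, hx, rfl⟩)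

theorem IsCSSeparator.of_weakHom {π₁ π₂ : α → α} {T T₁ T₂ : FTG α}
    {F₁ F₂ : Finset (Set α × Set α)} (hF₁ : T₁.IsCSSeparator F₁) (hF₂ : T₂.IsCSSeparator F₂)
    (hπ₁ : IsWeakHom π₁ T T₁) (hπ₂ : IsWeakHom π₂ T T₂)
    (hdisj : ∀ K S, T.IsClique K → T.IsStable S → Disjoint K S →
      Disjoint (π₁ '' K) (π₁ '' S) ∨ Disjoint (π₂ '' K) (π₂ '' S)) :
    ∃ F, T.IsCSSeparator F ∧ F.card ≤ F₁.card + F₂.card := by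
  classical
  refine ⟨F₁.image (pullbackCut T π₁) ∪ F₂.image (pullbackCut T π₂), ⟨?_, ?_⟩, ?_⟩
  · intro c hc
    rcases Finset.mem_union.1 hc with hc | hc <;>
    · obtain ⟨c', -, rfl⟩ := Finset.mem_image.1 hc
      exact isCut_pullbackCut T _ c'
  · intro K S hK hS hKS
    rcases hdisj K S hK hS hKS with h | h
    · obtain ⟨c, hc, hKc, hSc⟩ := hF₁.exists_pullbackCut hπ₁ hK hS h
      exact ⟨_, Finset.mem_union_left _ (Finset.mem_image_of_mem _ hc), hKc, hSc⟩
    · obtain ⟨c, hc, hKc, hSc⟩ := hF₂.exists_pullbackCut hπ₂ hK hS h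
      exact ⟨_, Finset.mem_union_right _ (Finset.mem_image_of_mem _ hc), hKc, hSc⟩
  · exact (Finset.card_union_le _ _).trans
      (add_le_add Finset.card_image_le Finset.card_image_le)

/-- One side of a generalized join, seen from `T1`: `T` consists of the parts `A j` of `T1` and
of sets `B i` that `T1` represents by the pairwise switchable marker vertices `b i`. -/
structure IsJoinSide (T T1 : FTG α) {r s : ℕ} (A : Fin r → Finset α) (B : Fin s → Finset α)
    (b : Fin s → α) : Prop where
  injective : Function.Injective b
  marker_not_mem : ∀ i j, b i ∉ A j
  part_subset : ∀ j, A j ⊆ T1.verts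
  marker_mem : ∀ i, b i ∈ T1.verts
  disjoint_blocks : ∀ i i', i ≠ i' → Disjoint (B i) (B i')
  disjoint_part_block : ∀ j i, Disjoint (A j) (B i)
  verts_subset : ∀ x ∈ T.verts, (∃ j, x ∈ A j) ∨ ∃ i, x ∈ B i
  theta_parts : ∀ j j', ∀ u ∈ A j, ∀ v ∈ A j', T.theta u v = T1.theta u v
  theta_markers : ∀ i i', i ≠ i' → T1.theta (b i) (b i') = 0
  theta_cross : ∀ j i,
    (∀ u ∈ A j, T1.theta (b i) u = 1 ∧ ∀ v ∈ B i, T.theta u v = 1) ∨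
    (∀ u ∈ A j, T1.theta (b i) u = -1 ∧ ∀ v ∈ B i, T.theta u v = -1)

open Classical in
noncomputable def collapse {s : ℕ} (B : Fin s → Finset α) (b : Fin s → α) (x : α) : α :=
  if h : ∃ i, x ∈ B i then b h.choose else x

namespace IsJoinSide

variable {T T1 : FTG α} {r s : ℕ} {A : Fin r → Finset α} {B : Fin s → Finset α} {b : Fin s → α}

theorem collapse_of_mem_block (h : IsJoinSide T T1 A B b) {i : Fin s} {x : α} (hx : x ∈ B i) :
    collapse B b x = b i := by
  have hex : ∃ i, x ∈ B i := ⟨i, hx⟩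
  rw [collapse, dif_pos hex]
  by_contra hne
  exact Finset.disjoint_left.1 (h.disjoint_blocks _ _ fun he => hne (congrArg b he))
    hex.choose_spec hx

theorem collapse_of_mem_part (h : IsJoinSide T T1 A B b) {j : Fin r} {x : α} (hx : x ∈ A j) :
    collapse B b x = x :=
  dif_neg fun ⟨i, hxi⟩ => Finset.disjoint_left.1 (h.disjoint_part_block j i) hx hxi

theorem theta_marker_eq (h : IsJoinSide T T1 A B b) {j : Fin r} {i : Fin s} {u v : α}
    (hu : u ∈ A j) (hv : v ∈ B i) : T1.theta (b i) u = T.theta u v := by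
  rcases h.theta_cross j i with hc | hc <;> rw [(hc u hu).1, (hc u hu).2 v hv]

theorem isWeakHom_collapse (h : IsJoinSide T T1 A B b) : IsWeakHom (collapse B b) T T1 := by
  refine ⟨fun x hx => ?_, fun x hx y hy hxy => ?_⟩
  · rcases h.verts_subset x hx with ⟨j, hxj⟩ | ⟨i, hxi⟩
    · rw [h.collapse_of_mem_part hxj]; exact h.part_subset j hxj
    · rw [h.collapse_of_mem_block hxi]; exact h.marker_mem i
  rcases h.verts_subset x hx with ⟨j, hxj⟩ | ⟨i, hxi⟩ <;>
    rcases h.verts_subset y hy with ⟨j', hyj⟩ | ⟨i', hyi⟩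
  · rw [h.collapse_of_mem_part hxj, h.collapse_of_mem_part hyj]
    exact Or.inr (h.theta_parts j j' x hxj y hyj).symm
  · rw [h.collapse_of_mem_part hxj, h.collapse_of_mem_block hyi, T1.symm]
    exact Or.inr (h.theta_marker_eq hxj hyi)
  · rw [h.collapse_of_mem_block hxi, h.collapse_of_mem_part hyj, T.symm]
    exact Or.inr (h.theta_marker_eq hyj hxi)
  · rw [h.collapse_of_mem_block hxi, h.collapse_of_mem_block hyi] at hxy ⊢
    exact Or.inl (h.theta_markers i i' fun he => hxy (congrArg b he))

theorem disjoint_image_collapse (h : IsJoinSide T T1 A B b) {K S : Set α}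
    (hK : K ⊆ T.verts) (hS : S ⊆ T.verts) (hKS : Disjoint K S)
    (hB : ∀ i, Disjoint K ↑(B i) ∨ Disjoint S ↑(B i)) :
    Disjoint (collapse B b '' K) (collapse B b '' S) := by
  rw [Set.disjoint_left]
  rintro _ ⟨x, hxK, rfl⟩ ⟨y, hyS, hxy⟩
  rcases h.verts_subset x (hK hxK) with ⟨j, hxj⟩ | ⟨i, hxi⟩ <;>
    rcases h.verts_subset y (hS hyS) with ⟨j', hyj⟩ | ⟨i', hyi⟩
  · rw [h.collapse_of_mem_part hxj, h.collapse_of_mem_part hyj] at hxy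
    exact Set.disjoint_left.1 hKS hxK (hxy ▸ hyS)
  · rw [h.collapse_of_mem_part hxj, h.collapse_of_mem_block hyi] at hxy
    exact h.marker_not_mem i' j (hxy ▸ hxj)
  · rw [h.collapse_of_mem_block hxi, h.collapse_of_mem_part hyj] at hxy
    exact h.marker_not_mem i j' (hxy ▸ hyj)
  · rw [h.collapse_of_mem_block hxi, h.collapse_of_mem_block hyi, h.injective.eq_iff] at hxy
    subst hxy
    rcases hB i' with hd | hd
    · exact Set.disjoint_left.1 hd hxK hxi
    · exact Set.disjoint_left.1 hd hyS hyi

/-- All pairs between a part and a block have the same nonzero adjacency value. -/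
theorem disjoint_part_of_not_disjoint_block (h : IsJoinSide T T1 A B b) {K S : Set α}
    (hK : T.IsClique K) (hS : T.IsStable S) {i : Fin s} (hKi : ¬Disjoint K ↑(B i))
    (hSi : ¬Disjoint S ↑(B i)) (j : Fin r) : Disjoint K ↑(A j) ∨ Disjoint S ↑(A j) := by
  by_contra! hj
  obtain ⟨v, hvK, hvB⟩ := Set.not_disjoint_iff.1 hKi
  obtain ⟨v', hv'S, hv'B⟩ := Set.not_disjoint_iff.1 hSi
  obtain ⟨u, huK, huA⟩ := Set.not_disjoint_iff.1 hj.1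
  obtain ⟨u', hu'S, hu'A⟩ := Set.not_disjoint_iff.1 hj.2
  have hne : ∀ {x y}, x ∈ A j → y ∈ B i → x ≠ y := fun hx hy he =>
    Finset.disjoint_left.1 (h.disjoint_part_block j i) hx (he ▸ hy)
  have hKuv := (hK.2 huK hvK (hne huA hvB)).2.2.2
  have hSuv := (hS.2 hu'S hv'S (hne hu'A hv'B)).2.2.2
  rcases h.theta_cross j i with hc | hc
  · have := (hc u' hu'A).2 v' hv'B; omega
  · have := (hc u huA).2 v hvB; omega

theorem disjoint_image_collapse_or {T2 : FTG α} {a : Fin r → α} (h₁ : IsJoinSide T T1 A B b)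
    (h₂ : IsJoinSide T T2 B A a) {K S : Set α} (hK : T.IsClique K) (hS : T.IsStable S)
    (hKS : Disjoint K S) :
    Disjoint (collapse B b '' K) (collapse B b '' S) ∨
      Disjoint (collapse A a '' K) (collapse A a '' S) := by
  by_cases hB : ∀ i, Disjoint K ↑(B i) ∨ Disjoint S ↑(B i)
  · exact Or.inl (h₁.disjoint_image_collapse hK.1 hS.1 hKS hB)
  · push Not at hB
    obtain ⟨i, hKi, hSi⟩ := hB
    exact Or.inr (h₂.disjoint_image_collapse hK.1 hS.1 hKS
      (h₁.disjoint_part_of_not_disjoint_block hK hS hKi hSi))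

end IsJoinSide

theorem IsGenJoin.exists_isJoinSide [DecidableEq α] {k : ℕ} {T T1 T2 : FTG α}
    (h : IsGenJoin k T T1 T2) :
    ∃ (r s : ℕ) (A : Fin r → Finset α) (B : Fin s → Finset α) (a : Fin r → α) (b : Fin s → α),
      IsJoinSide T T1 A B b ∧ IsJoinSide T T2 B A a := by
  obtain ⟨r, s, A, B, a, b, -, -, -, -, -, -, hAdisj, hBdisj, ha, hb, hbA, haB, hT12, hT1, hT2,
    hbb, haa, hsign, hT, hTA, hTB, hcross⟩ := h
  have hA : ∀ j, A j ⊆ T1.verts := fun j =>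
    hT1 ▸ (Finset.subset_biUnion_of_mem A (Finset.mem_univ j)).trans Finset.subset_union_left
  have hB : ∀ i, B i ⊆ T2.verts := fun i =>
    hT2 ▸ (Finset.subset_biUnion_of_mem B (Finset.mem_univ i)).trans Finset.subset_union_left
  have hAB : ∀ j i, Disjoint (A j) (B i) := fun j i =>
    (hT12.mono_left (hA j)).mono_right (hB i)
  have hverts : ∀ x ∈ T.verts, (∃ j, x ∈ A j) ∨ ∃ i, x ∈ B i := by
    intro x hx
    simpa only [hT, Finset.mem_union, Finset.mem_biUnion, Finset.mem_univ, true_and] using hx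
  refine ⟨r, s, A, B, a, b, ⟨hb, hbA, hA, fun i => ?_, hBdisj, hAB, hverts, ?_, hbb, ?_⟩,
    ⟨ha, haB, hB, fun j => ?_, hAdisj, fun i j => (hAB j i).symm,
      fun x hx => (hverts x hx).symm, ?_, haa, ?_⟩⟩
  · exact hT1 ▸ Finset.mem_union_right _ (Finset.mem_image_of_mem b (Finset.mem_univ i))
  · intro j j' u hu v hv
    exact hTA u (Finset.subset_biUnion_of_mem A (Finset.mem_univ j) hu) v
      (Finset.subset_biUnion_of_mem A (Finset.mem_univ j') hv)
  · intro j i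
    rcases hsign i j with hc | hc
    · exact Or.inl fun u hu => ⟨hc.1 u hu, fun v hv => (hcross j i u hu v hv).1 hc.1⟩
    · exact Or.inr fun u hu => ⟨hc.1 u hu, fun v hv => (hcross j i u hu v hv).2 hc.1⟩
  · exact hT2 ▸ Finset.mem_union_right _ (Finset.mem_image_of_mem a (Finset.mem_univ j))
  · intro i i' u hu v hv
    exact hTB u (Finset.subset_biUnion_of_mem B (Finset.mem_univ i) hu) v
      (Finset.subset_biUnion_of_mem B (Finset.mem_univ i') hv)
  · intro i j
    rcases hsign i j with hc | hc
    · exact Or.inl fun v hv =>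
        ⟨hc.2 v hv, fun u hu => T.symm u v ▸ (hcross j i u hu v hv).1 hc.1⟩
    · exact Or.inr fun v hv =>
        ⟨hc.2 v hv, fun u hu => T.symm u v ▸ (hcross j i u hu v hv).2 hc.1⟩

end FTG

theorem stmt_14_general {α : Type} [DecidableEq α] (k : ℕ) (T T1 T2 : FTG α)
    (hjoin : FTG.IsGenJoin k T T1 T2) (m1 m2 : ℕ)
    (h1 : ∃ F, FTG.IsCSSeparator T1 F ∧ F.card = m1)
    (h2 : ∃ F, FTG.IsCSSeparator T2 F ∧ F.card = m2) :
    ∃ F, FTG.IsCSSeparator T F ∧ F.card ≤ m1 + m2 := by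
  obtain ⟨F1, hF1, rfl⟩ := h1
  obtain ⟨F2, hF2, rfl⟩ := h2
  obtain ⟨r, s, A, B, a, b, hside1, hside2⟩ := hjoin.exists_isJoinSide
  exact hF1.of_weakHom hF2 hside1.isWeakHom_collapse hside2.isWeakHom_collapse
    fun _ _ => hside1.disjoint_image_collapse_or hside2

/-- If T is the generalized k-join of T1 and T2 which admit CS-separators
of sizes m1 and m2 respectively, then T admits a CS-separator of size at most m1 + m2. -/
theorem stmt_14 {α : Type} [DecidableEq α] (k : ℕ) (hk : 1 ≤ k) (T T1 T2 : FTG α)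
    (hjoin : FTG.IsGenJoin k T T1 T2) (m1 m2 : ℕ)
    (h1 : ∃ F, FTG.IsCSSeparator T1 F ∧ F.card = m1)
    (h2 : ∃ F, FTG.IsCSSeparator T2 F ∧ F.card = m2) :
    ∃ F, FTG.IsCSSeparator T F ∧ F.card ≤ m1 + m2 :=
  stmt_14_general k T T1 T2 hjoin m1 m2 h1 h2
end

section
/- Let A and B be disjoint finite sets, E a finite set, and endA : E → A, endB : E → B. Let m = |E| and suppose that for every vertex v ∈ A ∪ B, the number of e ∈ E with endA(e) = v or endB(e) = v is strictly less than m/3. Then there exist subsets E1, E2 ⊆ E with |E1| ≥ m/48 and |E2| ≥ m/48 such that for every e1 ∈ E1 and e2 ∈ E2, endA(e1) ≠ endA(e2) and endB(e1) ≠ endB(e2). -/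
/-!
Cut `E` twice: once by a set `S` of `A`-vertices and once by a set `T` of `B`-vertices, each cut
leaving at least `m/3` edges on either side. Such cuts exist because adding the vertex fibres one
at a time, each of size `< m/3`, the number of edges collected first reaches `m/3` while still
below `2m/3`. The two cuts split `E` into a `2 × 2` grid of edge classes whose rows and columns
all have `≥ m/3` edges, so one of the two diagonals has both cells of size `≥ m/6`. Edges in
opposite cells of a diagonal lie on different sides of both cuts, hence share no extremity.
-/

open Finset

theorem Finset.exists_subset_sum_mem_Ico {ι : Type*} (s : Finset ι) (w : ι → ℝ) {t c : ℝ}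
    (ht : 0 < t) (hw : ∀ i ∈ s, w i < c) (hs : t ≤ ∑ i ∈ s, w i) :
    ∃ u ⊆ s, t ≤ ∑ i ∈ u, w i ∧ ∑ i ∈ u, w i < t + c := by
  classical
  induction s using Finset.strongInduction with
  | _ s ih =>
    obtain ⟨i, hi⟩ : s.Nonempty := by
      by_contra! h
      simp only [h, sum_empty] at hs
      linarith
    by_cases hrest : t ≤ ∑ j ∈ s.erase i, w j
    · obtain ⟨u, hu, hlow, hup⟩ := ih (s.erase i) (erase_ssubset hi)
        (fun j hj => hw j (mem_of_mem_erase hj)) hrest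
      exact ⟨u, hu.trans (erase_subset _ _), hlow, hup⟩
    · refine ⟨s, Subset.refl _, hs, ?_⟩
      rw [← add_sum_erase _ _ hi]
      linarith [hw i hi]

theorem exists_cut_of_card_fiber_lt {α β : Type*} [DecidableEq α] (E : Finset β) (φ : β → α)
    {c : ℝ} (hc : 0 < c) (hE : 3 * c ≤ #E)
    (hfib : ∀ e ∈ E, (#{e' ∈ E | φ e' = φ e} : ℝ) < c) :
    ∃ S : Finset α, c ≤ #{e ∈ E | φ e ∈ S} ∧ c ≤ #{e ∈ E | φ e ∉ S} := by
  have hw : ∀ a ∈ E.image φ, (#{e ∈ E | φ e = a} : ℝ) < c := by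
    simpa only [forall_mem_image] using hfib
  have htotal : (#E : ℝ) = ∑ a ∈ E.image φ, (#{e ∈ E | φ e = a} : ℝ) := by
    exact_mod_cast card_eq_sum_card_image φ E
  obtain ⟨S, -, hlow, hup⟩ :=
    (E.image φ).exists_subset_sum_mem_Ico _ hc hw (by linarith)
  have hS : (#{e ∈ E | φ e ∈ S} : ℝ) = ∑ a ∈ S, (#{e ∈ E | φ e = a} : ℝ) := by
    exact_mod_cast (sum_card_fiberwise_eq_card_filter E S φ).symm
  have hsplit : (#{e ∈ E | φ e ∈ S} : ℝ) + #{e ∈ E | φ e ∉ S} = #E := by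
    exact_mod_cast card_filter_add_card_filter_not _
  exact ⟨S, by linarith, by linarith⟩

theorem card_filter_and_add_card_filter_and_not {β : Type*} (E : Finset β) (p q : β → Prop)
    [DecidablePred p] [DecidablePred q] :
    #{e ∈ E | p e ∧ q e} + #{e ∈ E | p e ∧ ¬q e} = #{e ∈ E | p e} := by
  rw [← filter_filter, ← filter_filter, card_filter_add_card_filter_not]

theorem exists_diagonal_half_le {β : Type*} (E : Finset β) (p q : β → Prop)
    [DecidablePred p] [DecidablePred q] {c : ℝ}
    (hp : c ≤ #{e ∈ E | p e}) (hnp : c ≤ #{e ∈ E | ¬p e})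
    (hq : c ≤ #{e ∈ E | q e}) (hnq : c ≤ #{e ∈ E | ¬q e}) :
    (c / 2 ≤ #{e ∈ E | p e ∧ q e} ∧ c / 2 ≤ #{e ∈ E | ¬p e ∧ ¬q e}) ∨
      (c / 2 ≤ #{e ∈ E | p e ∧ ¬q e} ∧ c / 2 ≤ #{e ∈ E | ¬p e ∧ q e}) := by
  have hrowP := card_filter_and_add_card_filter_and_not E p q
  have hrowNP := card_filter_and_add_card_filter_and_not E (¬p ·) q
  have hcolQ := card_filter_and_add_card_filter_and_not E q p
  have hcolNQ := card_filter_and_add_card_filter_and_not E (¬q ·) p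
  simp only [and_comm (a := q _), and_comm (a := ¬q _)] at hcolQ hcolNQ
  rify at hrowP hrowNP hcolQ hcolNQ
  by_cases hdiag : c / 2 ≤ #{e ∈ E | p e ∧ q e} ∧ c / 2 ≤ #{e ∈ E | ¬p e ∧ ¬q e}
  · exact Or.inl hdiag
  · right
    rw [not_and_or, not_le, not_le] at hdiag
    rcases hdiag with hsmall | hsmall <;> constructor <;> linarith

theorem stmt_16_general {α β : Type} [DecidableEq α] (A B : Finset α)
    (E : Finset β) (endA endB : β → α)
    (hA : ∀ e ∈ E, endA e ∈ A) (hB : ∀ e ∈ E, endB e ∈ B)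
    (hdeg : ∀ v ∈ A ∪ B,
      ((E.filter fun e => endA e = v ∨ endB e = v).card : ℝ) < (E.card : ℝ) / 3) :
    ∃ E1 E2 : Finset β, E1 ⊆ E ∧ E2 ⊆ E ∧
      (E.card : ℝ) / 48 ≤ (E1.card : ℝ) ∧ (E.card : ℝ) / 48 ≤ (E2.card : ℝ) ∧
      ∀ e1 ∈ E1, ∀ e2 ∈ E2, endA e1 ≠ endA e2 ∧ endB e1 ≠ endB e2 := by
  rcases E.eq_empty_or_nonempty with rfl | hE
  · exact ⟨∅, ∅, Subset.refl _, Subset.refl _, by simp, by simp, by simp⟩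
  have hc : 0 < (#E : ℝ) / 3 := by have := hE.card_pos; positivity
  have hfibA : ∀ e ∈ E, (#{e' ∈ E | endA e' = endA e} : ℝ) < #E / 3 := fun e he =>
    (Nat.cast_le.2 (card_le_card (monotone_filter_right E fun _ _ h => Or.inl h))).trans_lt
      (hdeg _ (mem_union_left _ (hA e he)))
  have hfibB : ∀ e ∈ E, (#{e' ∈ E | endB e' = endB e} : ℝ) < #E / 3 := fun e he =>
    (Nat.cast_le.2 (card_le_card (monotone_filter_right E fun _ _ h => Or.inr h))).trans_lt
      (hdeg _ (mem_union_right _ (hB e he)))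
  obtain ⟨S, hS, hnS⟩ := exists_cut_of_card_fiber_lt E endA hc (by linarith) hfibA
  obtain ⟨T, hT, hnT⟩ := exists_cut_of_card_fiber_lt E endB hc (by linarith) hfibB
  have hm : (#E : ℝ) / 48 ≤ #E / 3 / 2 := by linarith
  rcases exists_diagonal_half_le E _ _ hS hnS hT hnT with ⟨h1, h2⟩ | ⟨h1, h2⟩
  · refine ⟨_, _, filter_subset _ E, filter_subset _ E, hm.trans h1, hm.trans h2, ?_⟩
    simp only [mem_filter]
    exact fun e1 ⟨_, hS1, hT1⟩ e2 ⟨_, hS2, hT2⟩ =>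
      ⟨ne_of_mem_of_not_mem hS1 hS2, ne_of_mem_of_not_mem hT1 hT2⟩
  · refine ⟨_, _, filter_subset _ E, filter_subset _ E, hm.trans h1, hm.trans h2, ?_⟩
    simp only [mem_filter]
    exact fun e1 ⟨_, hS1, hT1⟩ e2 ⟨_, hS2, hT2⟩ =>
      ⟨ne_of_mem_of_not_mem hS1 hS2, (ne_of_mem_of_not_mem hT2 hT1).symm⟩

/-- In a bipartite multigraph (edge set E with endpoint maps into disjoint
sides A and B) with m edges and maximum degree strictly less than m/3, there exist
edge sets E1, E2 of size at least m/48 such that no edge of E1 shares an extremity with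
an edge of E2. -/
theorem stmt_16 {α β : Type} [DecidableEq α] (A B : Finset α) (hAB : Disjoint A B)
    (E : Finset β) (endA endB : β → α)
    (hA : ∀ e ∈ E, endA e ∈ A) (hB : ∀ e ∈ E, endB e ∈ B)
    (hdeg : ∀ v ∈ A ∪ B,
      ((E.filter fun e => endA e = v ∨ endB e = v).card : ℝ) < (E.card : ℝ) / 3) :
    ∃ E1 E2 : Finset β, E1 ⊆ E ∧ E2 ⊆ E ∧
      (E.card : ℝ) / 48 ≤ (E1.card : ℝ) ∧ (E.card : ℝ) / 48 ≤ (E2.card : ℝ) ∧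
      ∀ e1 ∈ E1, ∀ e2 ∈ E2, endA e1 ≠ endA e2 ∧ endB e1 ≠ endB e2 :=
  stmt_16_general A B E endA endB hA hB hdeg
end

section
/- Let k ≥ 1 and let c > 0 with ck < 1/2, and let 𝒞 be a class of finite simple graphs, closed under induced subgraphs, that is ck-good. Let T0 be a trigraph in closure(𝒞^{≤k}) containing at least one strongly adjacent pair or at least one strongly antiadjacent pair, and let w0 : V(T0) → ℕ be c-balanced. Then T0 admits a biclique or a complement biclique (V1, V2) with min(w0(V1), w0(V2)) ≥ c·w0(V(T0)). -/
/-!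
Induction along the closure. A trigraph of `𝒞^{≤k}` with a strong pair has at least two parts.
Keep in each part a vertex of maximal weight and give it the weight of its part: the induced
subgraph of a realization on these representatives lies in `𝒞`, has at least two vertices and
is `ck`-balanced (parts have at most `k` vertices). Pairs of distinct representatives are not
switchable, so a homogeneous pair of that graph is one of the trigraph, and since each
representative carries at most `k` times its own weight, heaviness at level `ck` there gives
heaviness at level `c` here.

For a generalized `k`-join with sides `A j` and `B i`, if some `A j` and some `B i` both weigh
at least `c·w(V)`, then `(A j, B i)` is the required pair. Otherwise, say, every `B i` is light;
contracting each `B i` to `b i` gives `T1` a balanced weight, and a heavy homogeneous pair of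
`T1` expands back to one of `T` of the same weights. Since the `b i` are pairwise switchable,
they never face each other across a homogeneous pair, so every strong relation used survives
the expansion.
-/

open Finset

namespace FTG

variable {α : Type}

def IsBalanced (c : ℝ) (T : FTG α) (w : α → ℕ) : Prop :=
  ∀ v ∈ T.verts, (w v : ℝ) ≤ c * ∑ x ∈ T.verts, (w x : ℝ)

def HasStrongPair (T : FTG α) : Prop :=
  ∃ u v, T.StrongAdj u v ∨ T.StrongAntiAdj u v

/-- `(V1, V2)` is a biclique or a complement biclique of `T`. -/
def IsHomogeneousPair (T : FTG α) (V1 V2 : Finset α) : Prop :=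
  (∀ u ∈ V1, ∀ v ∈ V2, T.StrongAdj u v) ∨ (∀ u ∈ V1, ∀ v ∈ V2, T.StrongAntiAdj u v)

def HasHeavyHomogeneousPair (c : ℝ) (T : FTG α) (w : α → ℕ) : Prop :=
  ∃ V1 V2 : Finset α, V1 ⊆ T.verts ∧ V2 ⊆ T.verts ∧ Disjoint V1 V2 ∧
    T.IsHomogeneousPair V1 V2 ∧
    c * (∑ x ∈ T.verts, (w x : ℝ)) ≤ min (∑ x ∈ V1, (w x : ℝ)) (∑ x ∈ V2, (w x : ℝ))

theorem hasStrongPair_of_theta_ne_zero {T : FTG α} {u v : α} (hu : u ∈ T.verts)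
    (hv : v ∈ T.verts) (hne : u ≠ v) (h : T.theta u v ≠ 0) : T.HasStrongPair := by
  rcases T.range u v with h' | h' | h'
  · exact ⟨u, v, .inr ⟨hu, hv, hne, h'⟩⟩
  · exact absurd h' h
  · exact ⟨u, v, .inl ⟨hu, hv, hne, h'⟩⟩

theorem IsHomogeneousPair.disjoint {T : FTG α} {V1 V2 : Finset α}
    (h : T.IsHomogeneousPair V1 V2) : Disjoint V1 V2 := by
  refine disjoint_left.2 fun x h1 h2 => ?_
  rcases h with h | h
  · exact (h x h1 x h2).2.2.1 rfl
  · exact (h x h1 x h2).2.2.1 rfl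

theorem isHomogeneousPair_of_theta_eq {T : FTG α} {V1 V2 : Finset α} {e : ℤ}
    (h1 : V1 ⊆ T.verts) (h2 : V2 ⊆ T.verts) (hdisj : Disjoint V1 V2) (he : e = 1 ∨ e = -1)
    (hθ : ∀ u ∈ V1, ∀ v ∈ V2, T.theta u v = e) : T.IsHomogeneousPair V1 V2 := by
  have hne : ∀ u ∈ V1, ∀ v ∈ V2, u ≠ v := fun u hu v hv huv =>
    disjoint_left.1 hdisj hu (huv ▸ hv)
  rcases he with rfl | rfl
  · exact .inl fun u hu v hv => ⟨h1 hu, h2 hv, hne u hu v hv, hθ u hu v hv⟩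
  · exact .inr fun u hu v hv => ⟨h1 hu, h2 hv, hne u hu v hv, hθ u hu v hv⟩

def ReflectsStrong (f : α → α) (T T' : FTG α) : Prop :=
  ∀ u ∈ T.verts, ∀ v ∈ T.verts, f u ∈ T'.verts → f v ∈ T'.verts → f u ≠ f v →
    T'.theta (f u) (f v) ≠ 0 → T.theta u v = T'.theta (f u) (f v)

section ReflectsStrong

variable {f : α → α} {T T' : FTG α} {w w' : α → ℕ} {c c' : ℝ}

theorem ReflectsStrong.strongAdj (hf : ReflectsStrong f T T') {u v : α} (hu : u ∈ T.verts)
    (hv : v ∈ T.verts) (h : T'.StrongAdj (f u) (f v)) : T.StrongAdj u v :=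
  ⟨hu, hv, fun huv => h.2.2.1 (congrArg f huv), by
    rw [hf u hu v hv h.1 h.2.1 h.2.2.1 (by rw [h.2.2.2]; norm_num), h.2.2.2]⟩

theorem ReflectsStrong.strongAntiAdj (hf : ReflectsStrong f T T') {u v : α} (hu : u ∈ T.verts)
    (hv : v ∈ T.verts) (h : T'.StrongAntiAdj (f u) (f v)) : T.StrongAntiAdj u v :=
  ⟨hu, hv, fun huv => h.2.2.1 (congrArg f huv), by
    rw [hf u hu v hv h.1 h.2.1 h.2.2.1 (by rw [h.2.2.2]; norm_num), h.2.2.2]⟩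

theorem HasHeavyHomogeneousPair.of_reflectsStrong [DecidableEq α] (hf : ReflectsStrong f T T')
    (hwt : ∀ U ⊆ T'.verts, c' * ∑ x ∈ T'.verts, (w' x : ℝ) ≤ ∑ x ∈ U, (w' x : ℝ) →
      c * ∑ x ∈ T.verts, (w x : ℝ) ≤ ∑ x ∈ T.verts with f x ∈ U, (w x : ℝ))
    (h : HasHeavyHomogeneousPair c' T' w') : HasHeavyHomogeneousPair c T w := by
  obtain ⟨U1, U2, hU1, hU2, hU, hhom, hheavy⟩ := h
  rw [le_min_iff] at hheavy
  refine ⟨{x ∈ T.verts | f x ∈ U1}, {x ∈ T.verts | f x ∈ U2}, filter_subset _ _,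
    filter_subset _ _, ?_, ?_, le_min (hwt U1 hU1 hheavy.1) (hwt U2 hU2 hheavy.2)⟩
  · exact disjoint_filter_filter' _ _ fun p h1 h2 x hx =>
      disjoint_left.1 hU (h1 x hx) (h2 x hx)
  · simp only [IsHomogeneousPair, mem_filter] at hhom ⊢
    rcases hhom with h | h
    · exact .inl fun u hu v hv => hf.strongAdj hu.1 hv.1 (h _ hu.2 _ hv.2)
    · exact .inr fun u hu v hv => hf.strongAntiAdj hu.1 hv.1 (h _ hu.2 _ hv.2)

theorem HasHeavyHomogeneousPair.of_le_mul [DecidableEq α] {k : ℕ} (hT' : T'.verts ⊆ T.verts)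
    (hid : ReflectsStrong id T T') (hk : 0 < k)
    (hsum : ∑ x ∈ T'.verts, (w' x : ℝ) = ∑ x ∈ T.verts, (w x : ℝ))
    (hle : ∀ v ∈ T'.verts, w' v ≤ k * w v) (h : HasHeavyHomogeneousPair (c * k) T' w') :
    HasHeavyHomogeneousPair c T w := by
  refine h.of_reflectsStrong hid fun U hU hheavy => ?_
  have hUT : {x ∈ T.verts | id x ∈ U} = U := by
    simpa only [id, filter_mem_eq_inter, inter_eq_right] using hU.trans hT'
  have hk' : (0 : ℝ) < k := by exact_mod_cast hk
  have hUle : ∑ x ∈ U, (w' x : ℝ) ≤ k * ∑ x ∈ U, (w x : ℝ) := by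
    rw [mul_sum]
    exact sum_le_sum fun x hx => by exact_mod_cast hle x (hU hx)
  rw [hsum] at hheavy
  rw [hUT]
  exact le_of_mul_le_mul_left (by linarith) hk'

end ReflectsStrong

section Contraction

variable [DecidableEq α] {f : α → α} {T T' : FTG α} {w : α → ℕ}

def pushWeight (f : α → α) (T : FTG α) (w : α → ℕ) (y : α) : ℕ :=
  ∑ x ∈ T.verts with f x = y, w x

theorem sum_pushWeight (U : Finset α) :
    ∑ y ∈ U, (pushWeight f T w y : ℝ) = ∑ x ∈ T.verts with f x ∈ U, (w x : ℝ) := by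
  simp only [pushWeight, Nat.cast_sum]
  exact sum_fiberwise_eq_sum_filter _ _ _ _

theorem sum_pushWeight_verts (hmaps : ∀ x ∈ T.verts, f x ∈ T'.verts) :
    ∑ y ∈ T'.verts, (pushWeight f T w y : ℝ) = ∑ x ∈ T.verts, (w x : ℝ) := by
  rw [sum_pushWeight, filter_true_of_mem hmaps]

theorem isBalanced_pushWeight {c : ℝ} (hmaps : ∀ x ∈ T.verts, f x ∈ T'.verts)
    (hlight : ∀ y ∈ T'.verts, (pushWeight f T w y : ℝ) ≤ c * ∑ x ∈ T.verts, (w x : ℝ)) :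
    IsBalanced c T' (pushWeight f T w) := by
  intro y hy
  rw [sum_pushWeight_verts hmaps]
  exact hlight y hy

theorem HasHeavyHomogeneousPair.of_contraction {c : ℝ} (hmaps : ∀ x ∈ T.verts, f x ∈ T'.verts)
    (hf : ReflectsStrong f T T') (h : HasHeavyHomogeneousPair c T' (pushWeight f T w)) :
    HasHeavyHomogeneousPair c T w :=
  h.of_reflectsStrong hf fun U _ hU => by rwa [sum_pushWeight_verts hmaps, sum_pushWeight] at hU

end Contraction

section BlowUp

variable [DecidableEq α] {s : ℕ}

noncomputable def blowUpMap (b : Fin s → α) (B : Fin s → Finset α) (x : α) : α :=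
  if h : ∃ i, x ∈ B i then b h.choose else x

theorem blowUpMap_cases (b : Fin s → α) (B : Fin s → Finset α) (x : α) :
    (∃ i, x ∈ B i ∧ blowUpMap b B x = b i) ∨ ((∀ i, x ∉ B i) ∧ blowUpMap b B x = x) := by
  unfold blowUpMap
  split_ifs with h
  · exact .inl ⟨_, h.choose_spec, rfl⟩
  · exact .inr ⟨not_exists.1 h, rfl⟩

/-- `T` arises from `T'` by replacing each vertex `b i` by the set `B i` and keeping the
vertices of `K`; the vertices `b i` are pairwise switchable in `T'`. -/
structure IsBlowUp (T' T : FTG α) (K : Finset α) (b : Fin s → α) (B : Fin s → Finset α) :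
    Prop where
  injective : Function.Injective b
  verts_left : T'.verts = K ∪ univ.image b
  verts_eq : T.verts = K ∪ univ.biUnion B
  not_mem : ∀ i, b i ∉ K
  theta_b : ∀ i i', i ≠ i' → T'.theta (b i) (b i') = 0
  theta_K : ∀ u ∈ K, ∀ v ∈ K, T.theta u v = T'.theta u v
  theta_B : ∀ i, ∀ u ∈ K, ∀ v ∈ B i, T.theta u v = T'.theta u (b i)

namespace IsBlowUp

variable {T T' : FTG α} {K : Finset α} {b : Fin s → α} {B : Fin s → Finset α}

theorem subset_verts (hβ : IsBlowUp T' T K b B) (i : Fin s) : B i ⊆ T.verts := by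
  rw [hβ.verts_eq]
  exact (subset_biUnion_of_mem B (mem_univ i)).trans subset_union_right

theorem mem_of_not_mem (hβ : IsBlowUp T' T K b B) {x : α} (hx : x ∈ T.verts)
    (hB : ∀ i, x ∉ B i) : x ∈ K := by
  rw [hβ.verts_eq, mem_union, mem_biUnion] at hx
  exact hx.resolve_right fun ⟨i, _, hi⟩ => hB i hi

theorem mapsTo (hβ : IsBlowUp T' T K b B) : ∀ x ∈ T.verts, blowUpMap b B x ∈ T'.verts := by
  intro x hx
  rw [hβ.verts_left]
  rcases blowUpMap_cases b B x with ⟨i, -, hi⟩ | ⟨hB, hx'⟩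
  · exact mem_union_right _ (hi ▸ mem_image_of_mem b (mem_univ i))
  · rw [hx']
    exact mem_union_left _ (hβ.mem_of_not_mem hx hB)

theorem reflectsStrong (hβ : IsBlowUp T' T K b B) : ReflectsStrong (blowUpMap b B) T T' := by
  intro u hu v hv _ _ hne hθ
  rcases blowUpMap_cases b B u with ⟨i, hui, hu'⟩ | ⟨huB, hu'⟩ <;>
    rcases blowUpMap_cases b B v with ⟨i', hvi, hv'⟩ | ⟨hvB, hv'⟩ <;>
    rw [hu', hv'] at hθ hne ⊢
  · exact absurd (hβ.theta_b i i' fun h => hne (h ▸ rfl)) hθ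
  · rw [T.symm, T'.symm, hβ.theta_B i v (hβ.mem_of_not_mem hv hvB) u hui]
  · exact hβ.theta_B i' u (hβ.mem_of_not_mem hu huB) v hvi
  · exact hβ.theta_K u (hβ.mem_of_not_mem hu huB) v (hβ.mem_of_not_mem hv hvB)

theorem fiber_subset (hβ : IsBlowUp T' T K b B) {y : α} (hy : y ∈ T'.verts) :
    (y ∈ K ∧ {x ∈ T.verts | blowUpMap b B x = y} ⊆ {y}) ∨
      ∃ i, {x ∈ T.verts | blowUpMap b B x = y} ⊆ B i := by
  rw [hβ.verts_left, mem_union, mem_image] at hy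
  rcases hy with hyK | ⟨i, -, rfl⟩
  · refine .inl ⟨hyK, fun x hx => ?_⟩
    rw [mem_filter] at hx
    rcases blowUpMap_cases b B x with ⟨i, -, hi⟩ | ⟨-, hx'⟩
    · exact absurd (hi ▸ hx.2 ▸ hyK) (hβ.not_mem i)
    · exact mem_singleton.2 (hx' ▸ hx.2)
  · refine .inr ⟨i, fun x hx => ?_⟩
    rw [mem_filter] at hx
    rcases blowUpMap_cases b B x with ⟨i', hxi', hi'⟩ | ⟨hB, hx'⟩
    · exact hβ.injective (hi' ▸ hx.2) ▸ hxi'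
    · have hxK := hβ.mem_of_not_mem hx.1 hB
      rw [← hx', hx.2] at hxK
      exact absurd hxK (hβ.not_mem i)

theorem hasStrongPair (hβ : IsBlowUp T' T K b B) {u v : α} {i : Fin s} (hu : u ∈ K)
    (hv : v ∈ B i) (h : T.theta u v ≠ 0) : T'.HasStrongPair := by
  rw [hβ.theta_B i u hu v hv] at h
  refine hasStrongPair_of_theta_ne_zero ?_ ?_ (by rintro rfl; exact hβ.not_mem i hu) h <;>
    rw [hβ.verts_left]
  · exact mem_union_left _ hu
  · exact mem_union_right _ (mem_image_of_mem b (mem_univ i))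

/-- `ih` is applied to the weights on `T'` that give `b i` the weight of `B i`. -/
theorem hasHeavyHomogeneousPair (hβ : IsBlowUp T' T K b B) {c : ℝ} {w : α → ℕ}
    (hw : IsBalanced c T w) (hB : ∀ i, ∑ x ∈ B i, (w x : ℝ) ≤ c * ∑ x ∈ T.verts, (w x : ℝ))
    (ih : ∀ w', IsBalanced c T' w' → HasHeavyHomogeneousPair c T' w') :
    HasHeavyHomogeneousPair c T w := by
  refine .of_contraction hβ.mapsTo hβ.reflectsStrong (ih _ (isBalanced_pushWeight hβ.mapsTo ?_))
  intro y hy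
  rcases hβ.fiber_subset hy with ⟨hyK, hsub⟩ | ⟨i, hsub⟩
  · calc (pushWeight (blowUpMap b B) T w y : ℝ) ≤ ∑ x ∈ {y}, (w x : ℝ) := by
          exact_mod_cast sum_le_sum_of_subset hsub
      _ ≤ _ := by
          rw [sum_singleton]
          exact hw y (hβ.verts_eq ▸ mem_union_left _ hyK)
  · calc (pushWeight (blowUpMap b B) T w y : ℝ) ≤ ∑ x ∈ B i, (w x : ℝ) := by
          exact_mod_cast sum_le_sum_of_subset hsub
      _ ≤ _ := hB i

end IsBlowUp

end BlowUp

section Base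

def induce (G : FTG α) (s : Finset α) : FTG α := ⟨s, G.theta, G.symm, G.range⟩

theorem IsRealization.reflectsStrong_induce {T G : FTG α} (hG : T.IsRealization G)
    {R : Finset α} (hR : R ⊆ T.verts) (hsw : ∀ u ∈ R, ∀ v ∈ R, u ≠ v → T.theta u v ≠ 0) :
    ReflectsStrong id T (G.induce R) := by
  intro u _ v _ hu hv hne hθ
  have hreal := hG.2.2 u v (hR hu) (hR hv) hne
  rcases T.range u v with h | h | h
  · exact h.trans (hreal.2 h).symm
  · exact absurd h (hsw u hu v hv hne)
  · exact h.trans (hreal.1 h).symm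

theorem eq_of_mem_of_mem {P : Finset (Finset α)}
    (hdisj : ∀ p ∈ P, ∀ q ∈ P, p ≠ q → Disjoint p q)
    {p q : Finset α} (hp : p ∈ P) (hq : q ∈ P) {x : α} (hxp : x ∈ p) (hxq : x ∈ q) : p = q :=
  by_contra fun hpq => disjoint_left.1 (hdisj p hp q hq hpq) hxp hxq

variable [DecidableEq α] {P : Finset (Finset α)} {rep : Finset α → α} {w : α → ℕ}

theorem theta_rep_ne_zero {T : FTG α} (hdisj : ∀ p ∈ P, ∀ q ∈ P, p ≠ q → Disjoint p q)
    (hrep : ∀ p ∈ P, rep p ∈ p) (hsub : ∀ p ∈ P, p ⊆ T.verts)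
    (hsep : ∀ u v, u ∈ T.verts → v ∈ T.verts → u ≠ v → T.theta u v = 0 →
      ∀ p ∈ P, (u ∈ p ↔ v ∈ p)) :
    ∀ u ∈ P.image rep, ∀ v ∈ P.image rep, u ≠ v → T.theta u v ≠ 0 := by
  simp only [forall_mem_image]
  intro p hp q hq hne h0
  have hqp : rep q ∈ p :=
    (hsep _ _ (hsub p hp (hrep p hp)) (hsub q hq (hrep q hq)) hne h0 p hp).1 (hrep p hp)
  exact hne (congrArg rep (eq_of_mem_of_mem hdisj hp hq hqp (hrep q hq)))

def partWeight (P : Finset (Finset α)) (rep : Finset α → α) (w : α → ℕ) (v : α) : ℕ :=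
  ∑ p ∈ P with rep p = v, ∑ x ∈ p, w x

theorem sum_partWeight (hdisj : ∀ p ∈ P, ∀ q ∈ P, p ≠ q → Disjoint p q) :
    ∑ v ∈ P.image rep, partWeight P rep w v = ∑ x ∈ P.biUnion id, w x := by
  rw [sum_biUnion (t := id) fun p hp q hq => hdisj p hp q hq]
  exact sum_fiberwise_of_maps_to (fun p hp => mem_image_of_mem rep hp) _

theorem partWeight_rep (hdisj : ∀ p ∈ P, ∀ q ∈ P, p ≠ q → Disjoint p q)
    (hrep : ∀ p ∈ P, rep p ∈ p) {q : Finset α} (hq : q ∈ P) :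
    partWeight P rep w (rep q) = ∑ x ∈ q, w x := by
  have hfib : {p ∈ P | rep p = rep q} = {q} := by
    ext p
    simp only [mem_filter, mem_singleton]
    exact ⟨fun ⟨hp, h⟩ => eq_of_mem_of_mem hdisj hp hq (hrep p hp) (h ▸ hrep q hq),
      by rintro rfl; exact ⟨hq, rfl⟩⟩
  rw [partWeight, hfib, sum_singleton]

theorem partWeight_rep_le (hdisj : ∀ p ∈ P, ∀ q ∈ P, p ≠ q → Disjoint p q)
    (hrep : ∀ p ∈ P, rep p ∈ p) {q : Finset α} (hq : q ∈ P) {k : ℕ} (hk : q.card ≤ k) {a : ℝ}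
    (ha0 : 0 ≤ a) (ha : ∀ x ∈ q, (w x : ℝ) ≤ a) : (partWeight P rep w (rep q) : ℝ) ≤ k * a := by
  rw [partWeight_rep hdisj hrep hq, Nat.cast_sum]
  calc ∑ x ∈ q, (w x : ℝ) ≤ q.card • a := sum_le_card_nsmul _ _ _ ha
    _ ≤ k * a := by
      rw [nsmul_eq_mul]
      exact mul_le_mul_of_nonneg_right (by exact_mod_cast hk) ha0

theorem hasHeavyHomogeneousPair_of_inCk {C : Set (FTG α)} {k : ℕ} {c : ℝ} {T : FTG α}
    (hered : ClosedUnderInduced C) (hgood : IsGood (c * k) C) (hT : InCk C k T)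
    (hpair : HasStrongPair T) (hw : IsBalanced c T w) : HasHeavyHomogeneousPair c T w := by
  obtain ⟨⟨P, hcover, hdisj, hcard, hswitch, hsep⟩, G, hGC, hG⟩ := hT
  have hpart : ∀ x ∈ T.verts, ∃ p ∈ P, x ∈ p := by
    simpa only [← hcover, mem_biUnion, id] using fun x hx => hx
  have hsub : ∀ p ∈ P, p ⊆ T.verts := fun p hp => hcover ▸ subset_biUnion_of_mem id hp
  obtain ⟨u, v, huv⟩ := hpair
  obtain ⟨hu, hv, hne, hθ⟩ : u ∈ T.verts ∧ v ∈ T.verts ∧ u ≠ v ∧ T.theta u v ≠ 0 := by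
    rcases huv with h | h <;> exact ⟨h.1, h.2.1, h.2.2.1, by rw [h.2.2.2]; norm_num⟩
  obtain ⟨p, hp, hup⟩ := hpart u hu
  obtain ⟨q, hq, hvq⟩ := hpart v hv
  have : Nonempty α := ⟨u⟩
  choose! rep hrep hmax using fun (p : Finset α) (hp : p ∈ P) =>
    p.exists_max_image w (card_pos.1 (hcard p hp).1)
  set R := P.image rep
  have hRT : R ⊆ T.verts := image_subset_iff.2 fun p hp => hsub p hp (hrep p hp)
  -- parts are cliques of switchable pairs, so a strong pair lies in two different parts
  have hR : 2 ≤ R.card := one_lt_card.2 ⟨rep p, mem_image_of_mem rep hp, rep q,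
    mem_image_of_mem rep hq, fun h => hθ (hswitch p hp u hup v
      (eq_of_mem_of_mem hdisj hq hp (hrep q hq) (h ▸ hrep p hp) ▸ hvq) hne)⟩
  have hsw := theta_rep_ne_zero hdisj hrep hsub hsep
  have hsum : ∑ v ∈ R, (partWeight P rep w v : ℝ) = ∑ x ∈ T.verts, (w x : ℝ) := by
    rw [← hcover]
    exact_mod_cast sum_partWeight hdisj
  have hk : 0 < k := (hcard p hp).1.trans (hcard p hp).2
  have hcW : 0 ≤ c * ∑ x ∈ T.verts, (w x : ℝ) := (Nat.cast_nonneg _).trans (hw u hu)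
  refine .of_le_mul (hG.1 ▸ hRT) (hG.reflectsStrong_induce hRT hsw) hk hsum ?_
    (hgood _ (hered G hGC R (hG.1 ▸ hRT)) hR _ ?_)
  · simp only [induce, R, forall_mem_image]
    intro q hq
    exact_mod_cast partWeight_rep_le hdisj hrep hq (hcard q hq).2 (Nat.cast_nonneg _)
      fun x hx => Nat.cast_le.2 (hmax q hq x hx)
  · simp only [R, forall_mem_image]
    intro q hq
    rw [hsum, mul_comm c, mul_assoc]
    exact partWeight_rep_le hdisj hrep hq (hcard q hq).2 hcW fun x hx => hw x (hsub q hq hx)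

end Base

section Join

variable [DecidableEq α] {k : ℕ} {T T1 T2 : FTG α}

theorem IsGenJoin.exists_isBlowUp (hj : IsGenJoin k T T1 T2) :
    ∃ (r s : ℕ) (A : Fin r → Finset α) (B : Fin s → Finset α) (a : Fin r → α) (b : Fin s → α),
      IsBlowUp T1 T (univ.biUnion A) b B ∧ IsBlowUp T2 T (univ.biUnion B) a A ∧
      HasStrongPair T1 ∧ HasStrongPair T2 ∧ ∀ j i, T.IsHomogeneousPair (A j) (B i) := by
  obtain ⟨r, s, A, B, a, b, hr, -, hs, -, hA, hB, -, -, ha, hb, hbA, haB, h12, h1, h2, hbb, haa,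
    hdich, hT, hTA, hTB, hcross⟩ := hj
  have hsign : ∀ j i, ∃ e : ℤ, (e = 1 ∨ e = -1) ∧ (∀ u ∈ A j, T1.theta (b i) u = e) ∧
      (∀ v ∈ B i, T2.theta (a j) v = e) ∧ ∀ u ∈ A j, ∀ v ∈ B i, T.theta u v = e := by
    intro j i
    rcases hdich i j with ⟨hbi, haj⟩ | ⟨hbi, haj⟩
    · exact ⟨1, .inl rfl, hbi, haj, fun u hu v hv => (hcross j i u hu v hv).1 hbi⟩
    · exact ⟨-1, .inr rfl, hbi, haj, fun u hu v hv => (hcross j i u hu v hv).2 hbi⟩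
  choose e he heA heB heT using hsign
  have hAB : ∀ j i, Disjoint (A j) (B i) := fun j i =>
    h12.mono ((subset_biUnion_of_mem A (mem_univ j)).trans (h1 ▸ subset_union_left))
      ((subset_biUnion_of_mem B (mem_univ i)).trans (h2 ▸ subset_union_left))
  have hβ1 : IsBlowUp T1 T (univ.biUnion A) b B := by
    refine ⟨hb, h1, hT, ?_, hbb, hTA, ?_⟩
    · simpa only [mem_biUnion, mem_univ, true_and, not_exists] using fun i j => hbA i j
    · simp only [mem_biUnion, mem_univ, true_and]
      rintro i u ⟨j, hu⟩ v hv
      rw [heT j i u hu v hv, T1.symm, heA j i u hu]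
  have hβ2 : IsBlowUp T2 T (univ.biUnion B) a A := by
    refine ⟨ha, h2, hT.trans (union_comm _ _), ?_, haa, hTB, ?_⟩
    · simpa only [mem_biUnion, mem_univ, true_and, not_exists] using fun j i => haB j i
    · simp only [mem_biUnion, mem_univ, true_and]
      rintro j u ⟨i, hu⟩ v hv
      rw [T.symm, heT j i v hv u hu, T2.symm, heB j i u hu]
  have hhom : ∀ j i, T.IsHomogeneousPair (A j) (B i) := fun j i =>
    isHomogeneousPair_of_theta_eq (hβ2.subset_verts j) (hβ1.subset_verts i) (hAB j i) (he j i)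
      (heT j i)
  obtain ⟨u, hu⟩ := hA ⟨0, hr⟩
  obtain ⟨v, hv⟩ := hB ⟨0, hs⟩
  have huv : T.theta u v ≠ 0 := by
    rcases he _ _ with h | h <;> rw [heT _ _ u hu v hv, h] <;> norm_num
  refine ⟨r, s, A, B, a, b, hβ1, hβ2, hβ1.hasStrongPair (mem_biUnion.2 ⟨_, mem_univ _, hu⟩) hv huv,
    hβ2.hasStrongPair (mem_biUnion.2 ⟨_, mem_univ _, hv⟩) hu (T.symm u v ▸ huv), hhom⟩

theorem hasHeavyHomogeneousPair_of_isGenJoin {c : ℝ} {w : α → ℕ} (hj : IsGenJoin k T T1 T2)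
    (ih1 : T1.HasStrongPair → ∀ w, IsBalanced c T1 w → HasHeavyHomogeneousPair c T1 w)
    (ih2 : T2.HasStrongPair → ∀ w, IsBalanced c T2 w → HasHeavyHomogeneousPair c T2 w)
    (hw : IsBalanced c T w) : HasHeavyHomogeneousPair c T w := by
  obtain ⟨r, s, A, B, a, b, hβ1, hβ2, hpair1, hpair2, hhom⟩ := hj.exists_isBlowUp
  by_cases hB : ∀ i, ∑ x ∈ B i, (w x : ℝ) ≤ c * ∑ x ∈ T.verts, (w x : ℝ)
  · exact hβ1.hasHeavyHomogeneousPair hw hB (ih1 hpair1)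
  by_cases hA : ∀ j, ∑ x ∈ A j, (w x : ℝ) ≤ c * ∑ x ∈ T.verts, (w x : ℝ)
  · exact hβ2.hasHeavyHomogeneousPair hw hA (ih2 hpair2)
  obtain ⟨i, hi⟩ := not_forall.1 hB
  obtain ⟨j, hj⟩ := not_forall.1 hA
  exact ⟨A j, B i, hβ2.subset_verts j, hβ1.subset_verts i, (hhom j i).disjoint, hhom j i,
    le_min (le_of_not_ge hj) (le_of_not_ge hi)⟩

end Join

end FTG

theorem stmt_18_general {α : Type} [DecidableEq α] (k : ℕ) (c : ℝ)
    (C : Set (FTG α))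
    (hered : FTG.ClosedUnderInduced C) (hgood : FTG.IsGood (c * k) C)
    (T0 : FTG α) (hT0 : FTG.InClosure C k T0)
    (hedge : ∃ u v, T0.StrongAdj u v ∨ T0.StrongAntiAdj u v)
    (w0 : α → ℕ) (hw0 : ∀ v ∈ T0.verts, (w0 v : ℝ) ≤ c * ∑ x ∈ T0.verts, (w0 x : ℝ)) :
    ∃ V1 V2 : Finset α, V1 ⊆ T0.verts ∧ V2 ⊆ T0.verts ∧ Disjoint V1 V2 ∧
      ((∀ u ∈ V1, ∀ v ∈ V2, T0.StrongAdj u v) ∨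
       (∀ u ∈ V1, ∀ v ∈ V2, T0.StrongAntiAdj u v)) ∧
      c * (∑ x ∈ T0.verts, (w0 x : ℝ)) ≤
        min (∑ x ∈ V1, (w0 x : ℝ)) (∑ x ∈ V2, (w0 x : ℝ)) := by
  induction hT0 generalizing w0 with
  | base T hT => exact FTG.hasHeavyHomogeneousPair_of_inCk hered hgood hT hedge hw0
  | join T T1 T2 _ _ hj ih1 ih2 => exact FTG.hasHeavyHomogeneousPair_of_isGenJoin hj ih1 ih2 hw0

/-- if 𝒞 is a ck-good hereditary class of graphs (k ≥ 1, 0 < c, ck < 1/2),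
then every trigraph T0 of the closure of 𝒞^{≤k} under generalized k-joins containing a
strongly adjacent or strongly antiadjacent pair, with a c-balanced weight function w0,
has a biclique or a complement biclique of weight at least c·w0(V(T0)). -/
theorem stmt_18 {α : Type} [DecidableEq α] (k : ℕ) (hk : 1 ≤ k) (c : ℝ) (hc : 0 < c)
    (hck : c * k < 1 / 2) (C : Set (FTG α)) (hgraph : ∀ G ∈ C, FTG.IsGraph G)
    (hered : FTG.ClosedUnderInduced C) (hgood : FTG.IsGood (c * k) C)
    (T0 : FTG α) (hT0 : FTG.InClosure C k T0)
    (hedge : ∃ u v, T0.StrongAdj u v ∨ T0.StrongAntiAdj u v)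
    (w0 : α → ℕ) (hw0 : ∀ v ∈ T0.verts, (w0 v : ℝ) ≤ c * ∑ x ∈ T0.verts, (w0 x : ℝ)) :
    ∃ V1 V2 : Finset α, V1 ⊆ T0.verts ∧ V2 ⊆ T0.verts ∧ Disjoint V1 V2 ∧
      ((∀ u ∈ V1, ∀ v ∈ V2, T0.StrongAdj u v) ∨
       (∀ u ∈ V1, ∀ v ∈ V2, T0.StrongAntiAdj u v)) ∧
      c * (∑ x ∈ T0.verts, (w0 x : ℝ)) ≤
        min (∑ x ∈ V1, (w0 x : ℝ)) (∑ x ∈ V2, (w0 x : ℝ)) :=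
  stmt_18_general k c C hered hgood T0 hT0 hedge w0 hw0
end
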